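/- arXiv:1301.5453 — 14 statements merged into one kernel-verified Lean document; each statement's English description precedes it below -/
import Mathlib

section
/- Let K be a field, α N₁ N₂ : ℕ, let g be a block matrix over K indexed by Fin α ⊕ Fin N₁ with blocks a,b,c,d, and h a block matrix indexed by Fin α ⊕ Fin N₂ with blocks p,q,r,t. Let u : Matrix (Fin N₁) (Fin N₁) K and v : Matrix (Fin N₂) (Fin N₂) K be invertible. Set g' := the block matrix with blocks a, b*u⁻¹, u*c, u*d*u⁻¹ (the conjugate of g by Matrix.fromBlocks 1 0 0 u) and h' := the block matrix with blocks p, q*v⁻¹, v*r, v*t*v⁻¹. Then g'∘h' = E * (g∘h) * E⁻¹, where E is the matrix indexed by Fin α ⊕ (Fin N₁ ⊕ Fin N₂) given by Matrix.fromBlocks 1 0 0 (Matrix.fromBlocks u 0 0 v). (Thus the ∘-product is well defined on conjugacy classes, i.e., on colligations.) -/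
open Matrix

/-- The ∘-product of two colligations. -/
noncomputable def collProd {K : Type*} [Field K] {α N₁ N₂ : ℕ}
    (g : Matrix (Fin α ⊕ Fin N₁) (Fin α ⊕ Fin N₁) K)
    (h : Matrix (Fin α ⊕ Fin N₂) (Fin α ⊕ Fin N₂) K) :
    Matrix (Fin α ⊕ (Fin N₁ ⊕ Fin N₂)) (Fin α ⊕ (Fin N₁ ⊕ Fin N₂)) K :=
  Matrix.fromBlocks
    (g.toBlocks₁₁ * h.toBlocks₁₁)
    (Matrix.fromCols g.toBlocks₁₂ (g.toBlocks₁₁ * h.toBlocks₁₂))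
    (Matrix.fromRows (g.toBlocks₂₁ * h.toBlocks₁₁) h.toBlocks₂₁)
    (Matrix.fromBlocks g.toBlocks₂₂ (g.toBlocks₂₁ * h.toBlocks₁₂) 0 h.toBlocks₂₂)

/-- The ∘-product is well defined on conjugacy classes (colligations). -/
theorem collProd_conj {K : Type*} [Field K] {α N₁ N₂ : ℕ}
    (g : Matrix (Fin α ⊕ Fin N₁) (Fin α ⊕ Fin N₁) K)
    (h : Matrix (Fin α ⊕ Fin N₂) (Fin α ⊕ Fin N₂) K)
    (u : Matrix (Fin N₁) (Fin N₁) K) (v : Matrix (Fin N₂) (Fin N₂) K)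
    (hu : IsUnit u) (hv : IsUnit v)
    (g' : Matrix (Fin α ⊕ Fin N₁) (Fin α ⊕ Fin N₁) K)
    (h' : Matrix (Fin α ⊕ Fin N₂) (Fin α ⊕ Fin N₂) K)
    (hg' : g' = Matrix.fromBlocks g.toBlocks₁₁ (g.toBlocks₁₂ * u⁻¹)
      (u * g.toBlocks₂₁) (u * g.toBlocks₂₂ * u⁻¹))
    (hh' : h' = Matrix.fromBlocks h.toBlocks₁₁ (h.toBlocks₁₂ * v⁻¹)
      (v * h.toBlocks₂₁) (v * h.toBlocks₂₂ * v⁻¹))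
    (E : Matrix (Fin α ⊕ (Fin N₁ ⊕ Fin N₂)) (Fin α ⊕ (Fin N₁ ⊕ Fin N₂)) K)
    (hE : E = Matrix.fromBlocks 1 0 0 (Matrix.fromBlocks u 0 0 v)) :
    collProd g' h' = E * collProd g h * E⁻¹ := by
  have hud : IsUnit u.det := (Matrix.isUnit_iff_isUnit_det u).mp hu
  have hvd : IsUnit v.det := (Matrix.isUnit_iff_isUnit_det v).mp hv
  have hEinv : E⁻¹ = Matrix.fromBlocks 1 0 0 (Matrix.fromBlocks u⁻¹ 0 0 v⁻¹) := by
    apply Matrix.inv_eq_right_inv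
    rw [hE]
    simp [Matrix.fromBlocks_multiply, Matrix.mul_nonsing_inv u hud,
      Matrix.mul_nonsing_inv v hvd, Matrix.fromBlocks_one]
  subst hg' hh' hE
  rw [hEinv]
  simp only [collProd, Matrix.toBlocks_fromBlocks₁₁, Matrix.toBlocks_fromBlocks₁₂,
    Matrix.toBlocks_fromBlocks₂₁, Matrix.toBlocks_fromBlocks₂₂,
    Matrix.fromBlocks_multiply, Matrix.fromCols_mul_fromBlocks,
    Matrix.fromBlocks_mul_fromRows, Matrix.mul_fromCols, Matrix.fromRows_mul]
  simp [Matrix.fromBlocks_multiply, Matrix.fromCols_mul_fromBlocks,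
    Matrix.fromBlocks_mul_fromRows, Matrix.mul_assoc,
    Matrix.nonsing_inv_mul u hud, Matrix.nonsing_inv_mul v hvd]
end

section
/- Let K be a field and let g, h, k be block matrices over K indexed by Fin α ⊕ Fin N₁, Fin α ⊕ Fin N₂, Fin α ⊕ Fin N₃ respectively. Then the ∘-product is associative up to the canonical re-association of indices: Matrix.reindex e e ((g∘h)∘k) = g∘(h∘k), where e : Fin α ⊕ ((Fin N₁ ⊕ Fin N₂) ⊕ Fin N₃) ≃ Fin α ⊕ (Fin N₁ ⊕ (Fin N₂ ⊕ Fin N₃)) is Equiv.sumCongr (Equiv.refl (Fin α)) (Equiv.sumAssoc (Fin N₁) (Fin N₂) (Fin N₃)). -/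
open Matrix

/-- The ∘-product is associative, up to the canonical re-association of indices.

Here the ∘-product of matrices indexed by `Fin α ⊕ I` for general finite index sets `I`
is obtained from `collProd` by regarding `Fin N₁ ⊕ Fin N₂` etc. as the second index set;
formally, `(g∘h)∘k` is `collProd` applied to matrices indexed by
`Fin α ⊕ (Fin N₁ ⊕ Fin N₂)` via its evident generalization, which we express by
reindexing. -/
theorem collProd_assoc {K : Type*} [Field K] {α N₁ N₂ N₃ : ℕ}
    (g : Matrix (Fin α ⊕ Fin N₁) (Fin α ⊕ Fin N₁) K)
    (h : Matrix (Fin α ⊕ Fin N₂) (Fin α ⊕ Fin N₂) K)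
    (k : Matrix (Fin α ⊕ Fin N₃) (Fin α ⊕ Fin N₃) K) :
    Matrix.reindex
      (Equiv.sumCongr (Equiv.refl (Fin α)) (Equiv.sumAssoc (Fin N₁) (Fin N₂) (Fin N₃)))
      (Equiv.sumCongr (Equiv.refl (Fin α)) (Equiv.sumAssoc (Fin N₁) (Fin N₂) (Fin N₃)))
      (Matrix.fromBlocks
        ((collProd g h).toBlocks₁₁ * k.toBlocks₁₁)
        (Matrix.fromCols (collProd g h).toBlocks₁₂ ((collProd g h).toBlocks₁₁ * k.toBlocks₁₂))
        (Matrix.fromRows ((collProd g h).toBlocks₂₁ * k.toBlocks₁₁) k.toBlocks₂₁)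
        (Matrix.fromBlocks (collProd g h).toBlocks₂₂ ((collProd g h).toBlocks₂₁ * k.toBlocks₁₂)
          0 k.toBlocks₂₂))
    = Matrix.fromBlocks
        (g.toBlocks₁₁ * (collProd h k).toBlocks₁₁)
        (Matrix.fromCols g.toBlocks₁₂ (g.toBlocks₁₁ * (collProd h k).toBlocks₁₂))
        (Matrix.fromRows (g.toBlocks₂₁ * (collProd h k).toBlocks₁₁) (collProd h k).toBlocks₂₁)
        (Matrix.fromBlocks g.toBlocks₂₂ (g.toBlocks₂₁ * (collProd h k).toBlocks₁₂)
          0 (collProd h k).toBlocks₂₂) := by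
  simp only [collProd, Matrix.toBlocks_fromBlocks₁₁, Matrix.toBlocks_fromBlocks₁₂,
    Matrix.toBlocks_fromBlocks₂₁, Matrix.toBlocks_fromBlocks₂₂,
    Matrix.fromRows_mul, Matrix.mul_fromCols, Matrix.mul_assoc]
  ext i j
  rcases i with i | (i | i | i) <;> rcases j with j | (j | j | j) <;>
    simp [Matrix.fromBlocks, Matrix.fromRows, Matrix.fromCols, Equiv.sumAssoc] <;> rfl
end

section
/- Let K be a field, g a block matrix over K indexed by Fin α ⊕ Fin N₁ with blocks a,b,c,d, and h a block matrix indexed by Fin α ⊕ Fin N₂ with blocks p,q,r,t. For every λ ∈ K such that IsUnit (1 - λ • d) and IsUnit (1 - λ • t), one has IsUnit (1 - λ • Matrix.fromBlocks d (c*q) 0 t) and χ_{g∘h}(λ) = χ_g(λ) * χ_h(λ); explicitly, a*p + λ • ([b, a*q] * (1 - λ • Matrix.fromBlocks d (c*q) 0 t)⁻¹ * [c*p; r]) = (a + λ • (b * (1 - λ • d)⁻¹ * c)) * (p + λ • (q * (1 - λ • t)⁻¹ * r)). -/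
open Matrix

/-- The characteristic function of a ∘-product of colligations is the product of
the characteristic functions: `χ_{g∘h}(λ) = χ_g(λ) * χ_h(λ)`. -/
theorem charFun_collProd {K : Type*} [Field K] {α N₁ N₂ : ℕ}
    (g : Matrix (Fin α ⊕ Fin N₁) (Fin α ⊕ Fin N₁) K)
    (h : Matrix (Fin α ⊕ Fin N₂) (Fin α ⊕ Fin N₂) K)
    (a : Matrix (Fin α) (Fin α) K) (b : Matrix (Fin α) (Fin N₁) K)
    (c : Matrix (Fin N₁) (Fin α) K) (d : Matrix (Fin N₁) (Fin N₁) K)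
    (p : Matrix (Fin α) (Fin α) K) (q : Matrix (Fin α) (Fin N₂) K)
    (r : Matrix (Fin N₂) (Fin α) K) (t : Matrix (Fin N₂) (Fin N₂) K)
    (ha : a = g.toBlocks₁₁) (hb : b = g.toBlocks₁₂)
    (hc : c = g.toBlocks₂₁) (hd : d = g.toBlocks₂₂)
    (hp : p = h.toBlocks₁₁) (hq : q = h.toBlocks₁₂)
    (hr : r = h.toBlocks₂₁) (ht : t = h.toBlocks₂₂)
    (lam : K) (hdu : IsUnit (1 - lam • d)) (htu : IsUnit (1 - lam • t)) :
    IsUnit (1 - lam • Matrix.fromBlocks d (c * q) 0 t) ∧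
    a * p + lam • (Matrix.fromCols b (a * q)
        * (1 - lam • Matrix.fromBlocks d (c * q) 0 t)⁻¹
        * Matrix.fromRows (c * p) r)
      = (a + lam • (b * (1 - lam • d)⁻¹ * c)) * (p + lam • (q * (1 - lam • t)⁻¹ * r)) := by
  set D := 1 - lam • d with hD
  set T := 1 - lam • t with hT
  have hM : (1 : Matrix (Fin N₁ ⊕ Fin N₂) (Fin N₁ ⊕ Fin N₂) K)
      - lam • Matrix.fromBlocks d (c * q) 0 t
      = Matrix.fromBlocks D (-(lam • (c * q))) 0 T := by
    ext (i | i) (j | j) <;>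
      simp [hD, hT, Matrix.sub_apply, Matrix.one_apply, Matrix.smul_apply]
  have hunit : IsUnit (1 - lam • Matrix.fromBlocks d (c * q) 0 t) := by
    rw [hM]
    exact Matrix.isUnit_fromBlocks_zero₂₁.mpr ⟨hdu, htu⟩
  refine ⟨hunit, ?_⟩
  have hinv : (1 - lam • Matrix.fromBlocks d (c * q) 0 t)⁻¹
      = Matrix.fromBlocks D⁻¹ (lam • (D⁻¹ * (c * q) * T⁻¹)) 0 T⁻¹ := by
    rw [hM, Matrix.inv_fromBlocks_zero₂₁_of_isUnit_iff _ _ _ (iff_of_true hdu htu)]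
    congr 1
    simp [Matrix.mul_smul, Matrix.smul_mul, Matrix.mul_assoc]
  rw [hinv, Matrix.fromCols_mul_fromBlocks, Matrix.fromCols_mul_fromRows]
  simp only [Matrix.mul_smul, Matrix.smul_mul, Matrix.add_mul, Matrix.mul_add,
    Matrix.zero_mul, Matrix.mul_zero, add_zero, smul_add, smul_smul, Matrix.mul_assoc]
  abel
end

section
/- Let K be a field and g a block matrix over K indexed by Fin α ⊕ Fin N with blocks a,b,c,d. Let I(g) be the block matrix indexed by Fin α ⊕ (Fin N ⊕ Fin 1) with blocks a, [b, 0], [c; 0], Matrix.fromBlocks d 0 0 1 (i.e., g extended by an extra diagonal entry 1). Then: (i) for every λ ∈ K, det (1 - λ • Matrix.fromBlocks d 0 0 (1 : Matrix (Fin 1) (Fin 1) K)) = (1 - λ) * det (1 - λ • d); and (ii) for every λ ∈ K with IsUnit (1 - λ • d) and λ ≠ 1, also IsUnit (1 - λ • Matrix.fromBlocks d 0 0 1) and χ_{I(g)}(λ) = χ_g(λ). -/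
open Matrix

/-- Extending a colligation by an extra diagonal entry `1` multiplies the polynomial
`det (1 - λ•d)` by `(1 - λ)` and does not change the characteristic function. -/
theorem charFun_extend {K : Type*} [Field K] {α N : ℕ}
    (g : Matrix (Fin α ⊕ Fin N) (Fin α ⊕ Fin N) K)
    (a : Matrix (Fin α) (Fin α) K) (b : Matrix (Fin α) (Fin N) K)
    (c : Matrix (Fin N) (Fin α) K) (d : Matrix (Fin N) (Fin N) K)
    (ha : a = g.toBlocks₁₁) (hb : b = g.toBlocks₁₂)
    (hc : c = g.toBlocks₂₁) (hd : d = g.toBlocks₂₂) :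
    (∀ lam : K,
      Matrix.det (1 - lam • Matrix.fromBlocks d 0 0 (1 : Matrix (Fin 1) (Fin 1) K))
        = (1 - lam) * Matrix.det (1 - lam • d)) ∧
    (∀ lam : K, IsUnit (1 - lam • d) → lam ≠ 1 →
      IsUnit (1 - lam • Matrix.fromBlocks d 0 0 (1 : Matrix (Fin 1) (Fin 1) K)) ∧
      a + lam • (Matrix.fromCols b (0 : Matrix (Fin α) (Fin 1) K)
          * (1 - lam • Matrix.fromBlocks d 0 0 (1 : Matrix (Fin 1) (Fin 1) K))⁻¹
          * Matrix.fromRows c (0 : Matrix (Fin 1) (Fin α) K))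
        = a + lam • (b * (1 - lam • d)⁻¹ * c)) := by
  have key : ∀ lam : K, (1 : Matrix (Fin N ⊕ Fin 1) (Fin N ⊕ Fin 1) K)
      - lam • Matrix.fromBlocks d 0 0 (1 : Matrix (Fin 1) (Fin 1) K)
      = Matrix.fromBlocks (1 - lam • d) 0 0 (1 - lam • (1 : Matrix (Fin 1) (Fin 1) K)) := by
    intro lam
    rw [Matrix.fromBlocks_smul, ← Matrix.fromBlocks_one]
    ext (i | i) (j | j) <;> simp [Matrix.one_apply]
  have detD : ∀ lam : K, (1 - lam • (1 : Matrix (Fin 1) (Fin 1) K)).det = 1 - lam := by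
    intro lam
    simp [Matrix.det_fin_one]
  constructor
  · intro lam
    rw [key, Matrix.det_fromBlocks_zero₂₁, detD, mul_comm]
  · intro lam hu hne
    have hD : IsUnit (1 - lam • (1 : Matrix (Fin 1) (Fin 1) K)) := by
      rw [Matrix.isUnit_iff_isUnit_det, detD]
      exact isUnit_iff_ne_zero.mpr (sub_ne_zero.mpr (fun h => hne h.symm))
    have hbig : IsUnit (1 - lam • Matrix.fromBlocks d 0 0 (1 : Matrix (Fin 1) (Fin 1) K)) := by
      rw [key, Matrix.isUnit_fromBlocks_zero₂₁]
      exact ⟨hu, hD⟩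
    refine ⟨hbig, ?_⟩
    have hiff : IsUnit (1 - lam • d) ↔ IsUnit (1 - lam • (1 : Matrix (Fin 1) (Fin 1) K)) :=
      ⟨fun _ => hD, fun _ => hu⟩
    rw [key, Matrix.inv_fromBlocks_zero₂₁_of_isUnit_iff _ _ _ hiff]
    simp only [Matrix.mul_zero, Matrix.zero_mul, neg_zero]
    rw [Matrix.fromCols_mul_fromBlocks, Matrix.fromCols_mul_fromRows]
    simp
end

section
/- Let g be a block matrix over ℚ_p indexed by Fin α ⊕ Fin N with blocks a,b,c,d, and let λ ∈ ℚ_p satisfy ‖λ‖ * ‖d i j‖ < 1 for all i j (padic norm). Then IsUnit (1 - λ • d), and the series expansion of the characteristic function holds: HasSum (fun k : ℕ => λ^(k+1) • (b * d^k * c)) (λ • (b * (1 - λ • d)⁻¹ * c)); in particular χ_g(λ) = a + ∑'_{k:ℕ} λ^(k+1) • (b * d^k * c). -/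
open Matrix

open scoped NNReal in
private lemma padic_pow_entry_bound {p : ℕ} [Fact p.Prime] {N : ℕ}
    (x : Matrix (Fin N) (Fin N) ℚ_[p]) {r : ℝ}
    (hr0 : 0 ≤ r) (hr : ∀ i j, ‖x i j‖ ≤ r) :
    ∀ (k : ℕ) (i j : Fin N), ‖(x ^ k) i j‖ ≤ r ^ k := by
  intro k
  induction k with
  | zero =>
    intro i j
    simp only [pow_zero, Matrix.one_apply]
    split <;> simp
  | succ k ih =>
    intro i j
    rw [pow_succ, Matrix.mul_apply]
    refine IsUltrametricDist.norm_sum_le_of_forall_le_of_nonneg (by positivity) fun m _ => ?_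
    rw [norm_mul]
    calc ‖(x ^ k) i m‖ * ‖x m j‖ ≤ r ^ k * r :=
          mul_le_mul (ih i m) (hr m j) (norm_nonneg _) (by positivity)
      _ = r ^ (k + 1) := (pow_succ r k).symm

open scoped NNReal in
private lemma padic_geom_core {p : ℕ} [Fact p.Prime] {α N : ℕ}
    (b : Matrix (Fin α) (Fin N) ℚ_[p])
    (c : Matrix (Fin N) (Fin α) ℚ_[p]) (d : Matrix (Fin N) (Fin N) ℚ_[p])
    (lam : ℚ_[p]) (hlam : ∀ i j, ‖lam‖ * ‖d i j‖ < 1) :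
    IsUnit (1 - lam • d) ∧
    HasSum (fun k : ℕ => lam ^ (k + 1) • (b * d ^ k * c)) (lam • (b * (1 - lam • d)⁻¹ * c)) := by
  set x := lam • d with hx
  obtain ⟨r, hr0, hr1, hr⟩ : ∃ r : ℝ, 0 ≤ r ∧ r < 1 ∧ ∀ i j, ‖x i j‖ ≤ r := by
    refine ⟨((Finset.univ.sup fun q : Fin N × Fin N => ‖x q.1 q.2‖₊ : ℝ≥0) : ℝ),
      by positivity, ?_, ?_⟩
    · rw [show (1:ℝ) = ((1:ℝ≥0):ℝ) by norm_num, NNReal.coe_lt_coe]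
      refine Finset.sup_lt_iff (by norm_num) |>.2 fun q _ => ?_
      rw [← NNReal.coe_lt_coe]
      simpa [hx, Matrix.smul_apply, norm_smul] using hlam q.1 q.2
    · intro i j
      exact_mod_cast NNReal.coe_le_coe.2
        (Finset.le_sup (f := fun q : Fin N × Fin N => ‖x q.1 q.2‖₊) (Finset.mem_univ (i, j)))
  have hbound := padic_pow_entry_bound x hr0 hr
  have hsum : Summable fun k : ℕ => x ^ k := by
    refine Pi.summable.2 fun i => Pi.summable.2 fun j => ?_
    exact Summable.of_norm_bounded (summable_geometric_of_lt_one hr0 hr1)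
      fun k => hbound k i j
  set y := ∑' k : ℕ, x ^ k with hy_def
  have hy : HasSum (fun k : ℕ => x ^ k) y := hsum.hasSum
  have hshift : HasSum (fun k : ℕ => x ^ (k + 1)) (y - 1) := by
    rw [hasSum_nat_add_iff 1]
    simpa using hy
  have htel : HasSum (fun k : ℕ => x ^ k - x ^ (k + 1)) 1 := by
    simpa using hy.sub hshift
  have h1 : (1 - x) * y = 1 := by
    have h := hy.mul_left (1 - x)
    have heq : (fun k : ℕ => (1 - x) * x ^ k) = fun k : ℕ => x ^ k - x ^ (k + 1) := by
      funext k; rw [sub_mul, one_mul, pow_succ']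
    rw [heq] at h
    exact h.unique htel
  have h2 : y * (1 - x) = 1 := by
    have h := hy.mul_right (1 - x)
    have heq : (fun k : ℕ => x ^ k * (1 - x)) = fun k : ℕ => x ^ k - x ^ (k + 1) := by
      funext k; rw [mul_sub, mul_one, pow_succ]
    rw [heq] at h
    exact h.unique htel
  have hunit : IsUnit (1 - x) := ⟨⟨1 - x, y, h1, h2⟩, rfl⟩
  have hinv : (1 - x)⁻¹ = y := Matrix.inv_eq_right_inv h1
  refine ⟨hunit, ?_⟩
  let l : Matrix (Fin N) (Fin N) ℚ_[p] →ₗ[ℚ_[p]] Matrix (Fin α) (Fin α) ℚ_[p] :=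
    { toFun := fun z => lam • (b * z * c)
      map_add' := fun z w => by simp [Matrix.mul_add, Matrix.add_mul, smul_add]
      map_smul' := fun t z => by
        simp [Matrix.mul_smul, Matrix.smul_mul, smul_smul, mul_comm] }
  have hmain := hy.mapL (LinearMap.toContinuousLinearMap l)
  simp only [LinearMap.coe_toContinuousLinearMap'] at hmain
  have heq : (fun k : ℕ => l (x ^ k)) = fun k : ℕ => lam ^ (k + 1) • (b * d ^ k * c) := by
    funext k
    show lam • (b * (lam • d) ^ k * c) = _
    rw [smul_pow, Matrix.mul_smul, Matrix.smul_mul, smul_smul, ← pow_succ']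
  rw [heq] at hmain
  rw [hinv]
  exact hmain

/-- Over `ℚ_p`, when `‖λ‖ * ‖d i j‖ < 1` for all entries of `d`, the matrix `1 - λ • d`
is invertible and the characteristic function has the convergent Taylor expansion
`χ_g(λ) = a + ∑' k, λ^(k+1) • (b * d^k * c)`. -/
theorem charFun_hasSum_padic {p : ℕ} [Fact p.Prime] {α N : ℕ}
    (g : Matrix (Fin α ⊕ Fin N) (Fin α ⊕ Fin N) ℚ_[p])
    (a : Matrix (Fin α) (Fin α) ℚ_[p]) (b : Matrix (Fin α) (Fin N) ℚ_[p])
    (c : Matrix (Fin N) (Fin α) ℚ_[p]) (d : Matrix (Fin N) (Fin N) ℚ_[p])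
    (ha : a = g.toBlocks₁₁) (hb : b = g.toBlocks₁₂)
    (hc : c = g.toBlocks₂₁) (hd : d = g.toBlocks₂₂)
    (lam : ℚ_[p]) (hlam : ∀ i j, ‖lam‖ * ‖d i j‖ < 1) :
    IsUnit (1 - lam • d) ∧
    HasSum (fun k : ℕ => lam ^ (k + 1) • (b * d ^ k * c)) (lam • (b * (1 - lam • d)⁻¹ * c)) ∧
    a + ∑' k : ℕ, lam ^ (k + 1) • (b * d ^ k * c)
      = a + lam • (b * (1 - lam • d)⁻¹ * c) := by
  obtain ⟨hunit, hmain⟩ := padic_geom_core b c d lam hlam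
  exact ⟨hunit, hmain, by rw [hmain.tsum_eq]⟩
end

section
/- Let K be an infinite field, g a block matrix over K indexed by Fin α ⊕ Fin N₁ with blocks a,b,c,d, and h a block matrix indexed by Fin α ⊕ Fin N₂ with blocks a',b',c',d'. Suppose that for every λ ∈ K with IsUnit (1 - λ • d) and IsUnit (1 - λ • d'), one has a + λ • (b * (1 - λ • d)⁻¹ * c) = a' + λ • (b' * (1 - λ • d')⁻¹ * c'). Then a = a' and, for every k : ℕ, b * d^k * c = b' * d'^k * c'. (The Taylor coefficients of the characteristic function at 0 recover all the invariants b d^k c and a.) -/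
open Matrix Polynomial

namespace CharFunAux
variable {K : Type*} [Field K] {α n : ℕ}

/-- The polynomial matrix `1 - X • d`. -/
noncomputable def Mp (d : Matrix (Fin n) (Fin n) K) : Matrix (Fin n) (Fin n) (Polynomial K) :=
  1 - (Polynomial.X : Polynomial K) • d.map Polynomial.C

/-- `det (1 - X • d)`. -/
noncomputable def pd (d : Matrix (Fin n) (Fin n) K) : Polynomial K := (Mp d).det

/-- `b * adjugate (1 - X • d) * c` as an `α × α` polynomial matrix. -/
noncomputable def Pm (b : Matrix (Fin α) (Fin n) K) (c : Matrix (Fin n) (Fin α) K)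
    (d : Matrix (Fin n) (Fin n) K) : Matrix (Fin α) (Fin α) (Polynomial K) :=
  b.map Polynomial.C * (Mp d).adjugate * c.map Polynomial.C

lemma evalM (lam : K) (d : Matrix (Fin n) (Fin n) K) :
    (Polynomial.evalRingHom lam).mapMatrix (Mp d) = 1 - lam • d := by
  ext i j
  simp only [Mp, RingHom.mapMatrix_apply, Matrix.map_apply, Matrix.sub_apply,
    Matrix.smul_apply, Matrix.one_apply, smul_eq_mul, map_sub, apply_ite (Polynomial.eval lam),
    Polynomial.eval_one, Polynomial.eval_zero, Polynomial.eval_mul, Polynomial.eval_X,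
    Polynomial.eval_C, coe_evalRingHom]

lemma eval_pd (lam : K) (d : Matrix (Fin n) (Fin n) K) :
    (pd d).eval lam = (1 - lam • d).det := by
  have := RingHom.map_det (Polynomial.evalRingHom lam) (Mp d)
  rw [pd, ← evalM lam d]
  exact this

lemma pd_eval_zero (d : Matrix (Fin n) (Fin n) K) : (pd d).eval 0 = 1 := by
  rw [eval_pd]; simp

lemma pd_ne_zero (d : Matrix (Fin n) (Fin n) K) : pd d ≠ 0 := fun h => by
  have := pd_eval_zero d; rw [h] at this; simp at this

lemma evalPm (lam : K) (b : Matrix (Fin α) (Fin n) K) (c : Matrix (Fin n) (Fin α) K)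
    (d : Matrix (Fin n) (Fin n) K) (hu : IsUnit (1 - lam • d).det) :
    (Pm b c d).map (Polynomial.eval lam) =
      (1 - lam • d).det • (b * (1 - lam • d)⁻¹ * c) := by
  have hadj : (1 - lam • d).adjugate = (1 - lam • d).det • (1 - lam • d)⁻¹ := by
    rw [Matrix.inv_def, smul_smul, Ring.mul_inverse_cancel _ hu, one_smul]
  have hmapadj : ((Mp d).adjugate).map (Polynomial.eval lam) = (1 - lam • d).adjugate := by
    have := RingHom.map_adjugate (Polynomial.evalRingHom lam) (Mp d)
    rw [evalM] at this
    simpa [RingHom.mapMatrix_apply] using this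
  have h1 : ∀ (m k : ℕ) (M : Matrix (Fin m) (Fin k) K),
      (M.map Polynomial.C).map (Polynomial.eval lam) = M := by
    intro m k M; ext i j; simp [Matrix.map_apply]
  have hmul : ∀ {m k l : ℕ} (M : Matrix (Fin m) (Fin k) (Polynomial K))
      (N : Matrix (Fin k) (Fin l) (Polynomial K)),
      (M * N).map (Polynomial.eval lam) = M.map (Polynomial.eval lam) * N.map (Polynomial.eval lam) :=
    fun M N => Matrix.map_mul (f := Polynomial.evalRingHom lam)
  rw [Pm, hmul, hmul, hmapadj, h1, h1, hadj]
  rw [Matrix.mul_smul, Matrix.smul_mul]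



noncomputable def Mq (d : Matrix (Fin n) (Fin n) K) : Matrix (Fin n) (Fin n) (PowerSeries K) :=
  1 - (PowerSeries.X : PowerSeries K) • d.map (PowerSeries.C (R := K))

lemma coe_Mp (d : Matrix (Fin n) (Fin n) K) :
    (Mp d).map (Polynomial.coeToPowerSeries.ringHom) = Mq d := by
  ext i j
  simp only [Mp, Mq, Matrix.map_apply, Matrix.sub_apply, Matrix.smul_apply, Matrix.one_apply,
    smul_eq_mul, map_sub, _root_.map_mul, apply_ite (Polynomial.coeToPowerSeries.ringHom),
    _root_.map_one, map_zero, Polynomial.coeToPowerSeries.ringHom_apply, Polynomial.coe_X,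
    Polynomial.coe_C, Polynomial.coe_one, Polynomial.coe_zero]

lemma map_pow_C (d : Matrix (Fin n) (Fin n) K) (j : ℕ) :
    (d ^ j).map (PowerSeries.C (R := K)) = (d.map (PowerSeries.C (R := K))) ^ j := by
  have := map_pow ((PowerSeries.C (R := K)).mapMatrix) d j
  simpa [RingHom.mapMatrix_apply] using this

lemma isUnit_det_Mq (d : Matrix (Fin n) (Fin n) K) : IsUnit (Mq d).det := by
  rw [← coe_Mp]
  have hdet := RingHom.map_det (Polynomial.coeToPowerSeries.ringHom) (Mp d)
  rw [RingHom.mapMatrix_apply] at hdet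
  rw [← hdet, PowerSeries.isUnit_iff_constantCoeff]
  have : (PowerSeries.constantCoeff (R := K)) ((Mp d).det : Polynomial K) = ((Mp d).det).coeff 0 := by
    rw [← PowerSeries.coeff_zero_eq_constantCoeff_apply, Polynomial.coeff_coe]
  rw [Polynomial.coeToPowerSeries.ringHom_apply, this, Polynomial.coeff_zero_eq_eval_zero]
  have hev := RingHom.map_det (Polynomial.evalRingHom (0 : K)) (Mp d)
  rw [RingHom.mapMatrix_apply] at hev
  have hM : (Mp d).map (Polynomial.eval (0 : K)) = 1 := by
    ext i j
    simp only [Mp, Matrix.map_apply, Matrix.sub_apply, Matrix.smul_apply, Matrix.one_apply,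
      smul_eq_mul, map_sub, _root_.map_mul, apply_ite (Polynomial.eval (0 : K)),
      Polynomial.eval_one, Polynomial.eval_zero, Polynomial.eval_X, Polynomial.eval_C]
    split <;> simp
  rw [coe_evalRingHom] at hev
  rw [hev, hM, Matrix.det_one]
  exact isUnit_one

lemma geom (d : Matrix (Fin n) (Fin n) K) (k : ℕ) :
    Mq d * (∑ j ∈ Finset.range (k + 1),
        (PowerSeries.X : PowerSeries K) ^ j • (d ^ j).map (PowerSeries.C (R := K))) =
      1 - (PowerSeries.X : PowerSeries K) ^ (k + 1) • (d ^ (k + 1)).map (PowerSeries.C (R := K)) := by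
  induction k with
  | zero => simp [Mq, Matrix.map_one]
  | succ k ih =>
    rw [Finset.sum_range_succ, mul_add, ih, mul_smul_comm]
    have : Mq d * (d ^ (k + 1)).map (PowerSeries.C (R := K)) =
        (d ^ (k + 1)).map (PowerSeries.C (R := K)) -
          (PowerSeries.X : PowerSeries K) • (d ^ (k + 2)).map (PowerSeries.C (R := K)) := by
      rw [Mq, sub_mul, one_mul, Matrix.smul_mul]
      simp only [map_pow_C]
      rw [← pow_succ']
    rw [this, smul_sub, smul_smul, ← pow_succ]
    abel

lemma Minv_eq (d : Matrix (Fin n) (Fin n) K) (k : ℕ) :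
    (Mq d)⁻¹ = (∑ j ∈ Finset.range (k + 1),
        (PowerSeries.X : PowerSeries K) ^ j • (d ^ j).map (PowerSeries.C (R := K))) +
      (PowerSeries.X : PowerSeries K) ^ (k + 1) •
        ((Mq d)⁻¹ * (d ^ (k + 1)).map (PowerSeries.C (R := K))) := by
  have hu := isUnit_det_Mq d
  have h := congrArg ((Mq d)⁻¹ * ·) (geom d k)
  simp only [← mul_assoc, Matrix.nonsing_inv_mul _ hu, one_mul] at h
  rw [h, mul_sub, mul_one, mul_smul_comm]
  abel

lemma coeff_F (b : Matrix (Fin α) (Fin n) K) (c : Matrix (Fin n) (Fin α) K)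
    (d : Matrix (Fin n) (Fin n) K) (k : ℕ) (i j : Fin α) :
    PowerSeries.coeff (R := K) k
        ((b.map (PowerSeries.C (R := K)) * (Mq d)⁻¹ * c.map (PowerSeries.C (R := K))) i j) =
      (b * d ^ k * c) i j := by
  rw [Minv_eq d k]
  rw [Matrix.mul_add, Matrix.add_mul]
  rw [Matrix.add_apply, map_add]
  have h2 : PowerSeries.coeff (R := K) k
      ((b.map (PowerSeries.C (R := K)) * ((PowerSeries.X : PowerSeries K) ^ (k + 1) •
        ((Mq d)⁻¹ * (d ^ (k + 1)).map (PowerSeries.C (R := K)))) * c.map (PowerSeries.C (R := K))) i j) = 0 := by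
    rw [Matrix.mul_smul, Matrix.smul_mul, Matrix.smul_apply, smul_eq_mul]
    exact PowerSeries.X_pow_dvd_iff.mp (dvd_mul_right _ _) k (Nat.lt_succ_self k)
  rw [h2, add_zero]
  rw [Matrix.mul_sum, Matrix.sum_mul]
  have h3 : ∀ j' ∈ Finset.range (k + 1),
      b.map (PowerSeries.C (R := K)) * ((PowerSeries.X : PowerSeries K) ^ j' •
          (d ^ j').map (PowerSeries.C (R := K))) * c.map (PowerSeries.C (R := K)) =
        (PowerSeries.X : PowerSeries K) ^ j' • ((b * d ^ j' * c).map (PowerSeries.C (R := K))) := by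
    intro j' _
    rw [Matrix.mul_smul, Matrix.smul_mul, Matrix.map_mul (f := PowerSeries.C (R := K)),
      Matrix.map_mul (f := PowerSeries.C (R := K))]
  rw [Finset.sum_congr rfl h3, Matrix.sum_apply, map_sum]
  have h4 : ∀ j' ∈ Finset.range (k + 1),
      PowerSeries.coeff (R := K) k (((PowerSeries.X : PowerSeries K) ^ j' •
          ((b * d ^ j' * c).map (PowerSeries.C (R := K)))) i j) =
        if k = j' then (b * d ^ j' * c) i j else 0 := by
    intro j' _
    rw [Matrix.smul_apply, Matrix.map_apply, smul_eq_mul, mul_comm, PowerSeries.coeff_C_mul,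
      PowerSeries.coeff_X_pow]
    split <;> simp
  rw [Finset.sum_congr rfl h4, Finset.sum_ite_eq]
  simp

lemma map_smul_eval (lam : K) {m k : ℕ} (q : Polynomial K)
    (M : Matrix (Fin m) (Fin k) (Polynomial K)) :
    (q • M).map (Polynomial.eval lam) = q.eval lam • M.map (Polynomial.eval lam) := by
  ext i j; simp [Matrix.map_apply, smul_eq_mul]

lemma map_add_eval (lam : K) {m k : ℕ} (M N : Matrix (Fin m) (Fin k) (Polynomial K)) :
    (M + N).map (Polynomial.eval lam) = M.map (Polynomial.eval lam) + N.map (Polynomial.eval lam) := by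
  ext i j; simp [Matrix.map_apply]

lemma map_smul_coe {m k : ℕ} (q : Polynomial K) (M : Matrix (Fin m) (Fin k) (Polynomial K)) :
    (q • M).map (Polynomial.coeToPowerSeries.ringHom) =
      Polynomial.coeToPowerSeries.ringHom q • M.map (Polynomial.coeToPowerSeries.ringHom) := by
  ext i j; simp [Matrix.map_apply, smul_eq_mul]

lemma map_add_coe {m k : ℕ} (M N : Matrix (Fin m) (Fin k) (Polynomial K)) :
    (M + N).map (Polynomial.coeToPowerSeries.ringHom) =
      M.map (Polynomial.coeToPowerSeries.ringHom) + N.map (Polynomial.coeToPowerSeries.ringHom) := by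
  ext i j; simp [Matrix.map_apply]

lemma map_C_eval (lam : K) {m k : ℕ} (M : Matrix (Fin m) (Fin k) K) :
    (M.map Polynomial.C).map (Polynomial.eval lam) = M := by
  ext i j; simp [Matrix.map_apply]

lemma map_C_coe {m k : ℕ} (M : Matrix (Fin m) (Fin k) K) :
    (M.map Polynomial.C).map (Polynomial.coeToPowerSeries.ringHom) =
      M.map (PowerSeries.C (R := K)) := by
  ext i j
  simp [Matrix.map_apply, Polynomial.coeToPowerSeries.ringHom_apply, Polynomial.coe_C]

lemma coe_Pm (b : Matrix (Fin α) (Fin n) K) (c : Matrix (Fin n) (Fin α) K)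
    (d : Matrix (Fin n) (Fin n) K) :
    (Pm b c d).map (Polynomial.coeToPowerSeries.ringHom) =
      (Mq d).det • (b.map (PowerSeries.C (R := K)) * (Mq d)⁻¹ * c.map (PowerSeries.C (R := K))) := by
  have hadj : (Mq d).adjugate = (Mq d).det • (Mq d)⁻¹ := by
    rw [Matrix.inv_def, smul_smul, Ring.mul_inverse_cancel _ (isUnit_det_Mq d), one_smul]
  have hmapadj : ((Mp d).adjugate).map (Polynomial.coeToPowerSeries.ringHom) =
      (Mq d).adjugate := by
    have := RingHom.map_adjugate (Polynomial.coeToPowerSeries.ringHom) (Mp d)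
    rw [RingHom.mapMatrix_apply, RingHom.mapMatrix_apply, coe_Mp] at this
    exact this
  have hmul : ∀ {m k l : ℕ} (M : Matrix (Fin m) (Fin k) (Polynomial K))
      (N : Matrix (Fin k) (Fin l) (Polynomial K)),
      (M * N).map (Polynomial.coeToPowerSeries.ringHom) =
        M.map (Polynomial.coeToPowerSeries.ringHom) * N.map (Polynomial.coeToPowerSeries.ringHom) :=
    fun M N => Matrix.map_mul (f := Polynomial.coeToPowerSeries.ringHom)
  rw [Pm, hmul, hmul, hmapadj, map_C_coe, map_C_coe, hadj, Matrix.mul_smul, Matrix.smul_mul]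

lemma det_Mq_eq (d : Matrix (Fin n) (Fin n) K) :
    Polynomial.coeToPowerSeries.ringHom (pd d) = (Mq d).det := by
  have := RingHom.map_det (Polynomial.coeToPowerSeries.ringHom) (Mp d)
  rw [RingHom.mapMatrix_apply, coe_Mp] at this
  exact this

lemma coe_X_ps : Polynomial.coeToPowerSeries.ringHom (Polynomial.X : Polynomial K) =
    (PowerSeries.X : PowerSeries K) := by
  rw [Polynomial.coeToPowerSeries.ringHom_apply, Polynomial.coe_X]

end CharFunAux

open CharFunAux in
/-- Over an infinite field, the characteristic function determines `a` and all of the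
invariants `b * d^k * c`. -/
theorem charFun_determines_invariants {K : Type*} [Field K] [Infinite K] {α N₁ N₂ : ℕ}
    (g : Matrix (Fin α ⊕ Fin N₁) (Fin α ⊕ Fin N₁) K)
    (h : Matrix (Fin α ⊕ Fin N₂) (Fin α ⊕ Fin N₂) K)
    (a : Matrix (Fin α) (Fin α) K) (b : Matrix (Fin α) (Fin N₁) K)
    (c : Matrix (Fin N₁) (Fin α) K) (d : Matrix (Fin N₁) (Fin N₁) K)
    (a' : Matrix (Fin α) (Fin α) K) (b' : Matrix (Fin α) (Fin N₂) K)
    (c' : Matrix (Fin N₂) (Fin α) K) (d' : Matrix (Fin N₂) (Fin N₂) K)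
    (ha : a = g.toBlocks₁₁) (hb : b = g.toBlocks₁₂)
    (hc : c = g.toBlocks₂₁) (hd : d = g.toBlocks₂₂)
    (ha' : a' = h.toBlocks₁₁) (hb' : b' = h.toBlocks₁₂)
    (hc' : c' = h.toBlocks₂₁) (hd' : d' = h.toBlocks₂₂)
    (heq : ∀ lam : K, IsUnit (1 - lam • d) → IsUnit (1 - lam • d') →
      a + lam • (b * (1 - lam • d)⁻¹ * c) = a' + lam • (b' * (1 - lam • d')⁻¹ * c')) :
    a = a' ∧ ∀ k : ℕ, b * d ^ k * c = b' * d' ^ k * c' := by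
  classical
  set P : Matrix (Fin α) (Fin α) (Polynomial K) :=
    (pd d') • ((pd d) • a.map Polynomial.C + (Polynomial.X : Polynomial K) • Pm b c d) with hP
  set Q : Matrix (Fin α) (Fin α) (Polynomial K) :=
    (pd d) • ((pd d') • a'.map Polynomial.C + (Polynomial.X : Polynomial K) • Pm b' c' d') with hQ
  -- Step 1 : P = Q
  have hPQ : P = Q := by
    have hfin : ({x : K | (pd d * pd d').IsRoot x}).Finite :=
      Polynomial.finite_setOf_isRoot (mul_ne_zero (pd_ne_zero d) (pd_ne_zero d'))
    have hinf : ({x : K | (pd d * pd d').IsRoot x}ᶜ).Infinite := hfin.infinite_compl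
    have key : ∀ lam ∈ ({x : K | (pd d * pd d').IsRoot x}ᶜ),
        P.map (Polynomial.eval lam) = Q.map (Polynomial.eval lam) := by
      intro lam hlam
      have hne : (pd d).eval lam ≠ 0 ∧ (pd d').eval lam ≠ 0 := by
        have : (pd d * pd d').eval lam ≠ 0 := hlam
        rw [Polynomial.eval_mul] at this
        exact ⟨left_ne_zero_of_mul this, right_ne_zero_of_mul this⟩
      have hud : IsUnit (1 - lam • d).det := by
        rw [← eval_pd]; exact (hne.1).isUnit
      have hud' : IsUnit (1 - lam • d').det := by
        rw [← eval_pd]; exact (hne.2).isUnit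
      have hE := heq lam ((Matrix.isUnit_iff_isUnit_det _).2 hud)
        ((Matrix.isUnit_iff_isUnit_det _).2 hud')
      have hmapP : P.map (Polynomial.eval lam) =
          ((pd d).eval lam * (pd d').eval lam) •
            (a + lam • (b * (1 - lam • d)⁻¹ * c)) := by
        rw [hP, map_smul_eval, map_add_eval, map_smul_eval, map_smul_eval, map_C_eval,
          evalPm lam b c d hud, Polynomial.eval_X, ← eval_pd lam d]
        module
      have hmapQ : Q.map (Polynomial.eval lam) =
          ((pd d).eval lam * (pd d').eval lam) •
            (a' + lam • (b' * (1 - lam • d')⁻¹ * c')) := by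
        rw [hQ, map_smul_eval, map_add_eval, map_smul_eval, map_smul_eval, map_C_eval,
          evalPm lam b' c' d' hud', Polynomial.eval_X, ← eval_pd lam d']
        module
      rw [hmapP, hmapQ, hE]
    refine Matrix.ext fun i j => ?_
    apply Polynomial.eq_of_infinite_eval_eq
    apply Set.Infinite.mono _ hinf
    intro lam hlam
    have h1 := congrFun (congrFun (key lam hlam) i) j
    simpa [Matrix.map_apply] using h1
  -- Step 2 : push to power series and cancel the unit
  have hG : a.map (PowerSeries.C (R := K)) + (PowerSeries.X : PowerSeries K) •
        (b.map (PowerSeries.C (R := K)) * (Mq d)⁻¹ * c.map (PowerSeries.C (R := K))) =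
      a'.map (PowerSeries.C (R := K)) + (PowerSeries.X : PowerSeries K) •
        (b'.map (PowerSeries.C (R := K)) * (Mq d')⁻¹ * c'.map (PowerSeries.C (R := K))) := by
    have hco := congrArg (fun M : Matrix (Fin α) (Fin α) (Polynomial K) =>
      M.map (Polynomial.coeToPowerSeries.ringHom)) hPQ
    simp only [hP, hQ] at hco
    have hmapsP : ((pd d') • ((pd d) • a.map Polynomial.C +
        (Polynomial.X : Polynomial K) • Pm b c d)).map (Polynomial.coeToPowerSeries.ringHom) =
        ((Mq d).det * (Mq d').det) • (a.map (PowerSeries.C (R := K)) + (PowerSeries.X : PowerSeries K) •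
          (b.map (PowerSeries.C (R := K)) * (Mq d)⁻¹ * c.map (PowerSeries.C (R := K)))) := by
      rw [map_smul_coe, map_add_coe, map_smul_coe, map_smul_coe, map_C_coe, coe_Pm,
        coe_X_ps, det_Mq_eq, det_Mq_eq]
      simp only [smul_add, smul_smul]
      congr 2 <;> ring
    have hmapsQ : ((pd d) • ((pd d') • a'.map Polynomial.C +
        (Polynomial.X : Polynomial K) • Pm b' c' d')).map (Polynomial.coeToPowerSeries.ringHom) =
        ((Mq d).det * (Mq d').det) • (a'.map (PowerSeries.C (R := K)) + (PowerSeries.X : PowerSeries K) •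
          (b'.map (PowerSeries.C (R := K)) * (Mq d')⁻¹ * c'.map (PowerSeries.C (R := K)))) := by
      rw [map_smul_coe, map_add_coe, map_smul_coe, map_smul_coe, map_C_coe, coe_Pm,
        coe_X_ps, det_Mq_eq, det_Mq_eq]
      simp only [smul_add, smul_smul]
      congr 2 <;> ring
    rw [hmapsP, hmapsQ] at hco
    have huu : IsUnit ((Mq d).det * (Mq d').det) :=
      (isUnit_det_Mq d).mul (isUnit_det_Mq d')
    refine Matrix.ext fun i j => ?_
    have h1 := congrFun (congrFun hco i) j
    simp only [Matrix.smul_apply, smul_eq_mul] at h1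
    exact huu.mul_left_cancel h1
  -- Step 3 : extract coefficients
  constructor
  · refine Matrix.ext fun i j => ?_
    have h1 := congrFun (congrFun hG i) j
    have h0 := congrArg (PowerSeries.coeff (R := K) 0) h1
    simp only [Matrix.add_apply, Matrix.smul_apply, Matrix.map_apply, map_add,
      smul_eq_mul] at h0
    have hx : ∀ (f : PowerSeries K),
        PowerSeries.coeff (R := K) 0 ((PowerSeries.X : PowerSeries K) * f) = 0 := fun f =>
      PowerSeries.X_pow_dvd_iff.mp (by rw [pow_one]; exact dvd_mul_right _ _) 0 one_pos
    rw [hx, hx] at h0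
    simpa using h0
  · intro k
    refine Matrix.ext fun i j => ?_
    have h1 := congrFun (congrFun hG i) j
    have hk := congrArg (PowerSeries.coeff (R := K) (k + 1)) h1
    simp only [Matrix.add_apply, Matrix.smul_apply, Matrix.map_apply, map_add,
      smul_eq_mul] at hk
    rw [PowerSeries.coeff_succ_X_mul, PowerSeries.coeff_succ_X_mul] at hk
    have hca : PowerSeries.coeff (R := K) (k + 1) (PowerSeries.C (R := K) (a i j)) = 0 := by
      simp [PowerSeries.coeff_C]
    have hca' : PowerSeries.coeff (R := K) (k + 1) (PowerSeries.C (R := K) (a' i j)) = 0 := by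
      simp [PowerSeries.coeff_C]
    rw [hca, hca', zero_add, zero_add] at hk
    rw [coeff_F, coeff_F] at hk
    exact hk
end

section
/- Let K be an algebraically closed field and W : Matrix (Fin α) (Fin α) (RatFunc K) a matrix of rational functions each of which is regular at 0, i.e., for all i j, Polynomial.eval 0 (RatFunc.denom (W i j)) ≠ 0. Then there exist N : ℕ and matrices a : Matrix (Fin α) (Fin α) K, b : Matrix (Fin α) (Fin N) K, c : Matrix (Fin N) (Fin α) K, d : Matrix (Fin N) (Fin N) K such that, in Matrix (Fin α) (Fin α) (RatFunc K), the matrix 1 - RatFunc.X • d.map RatFunc.C is invertible and W = a.map RatFunc.C + RatFunc.X • (b.map RatFunc.C * (1 - RatFunc.X • d.map RatFunc.C)⁻¹ * c.map RatFunc.C). (Every matrix-valued rational function regular at 0 is the characteristic function of a colligation.) -/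
open Matrix

set_option synthInstance.maxHeartbeats 1000000
set_option maxHeartbeats 2000000

section ColligationAux

variable {K : Type*} [Field K] {α : ℕ}

lemma unit_one_sub {n : Type} [Fintype n] [DecidableEq n] (d : Matrix n n K) :
    IsUnit (1 - (RatFunc.X : RatFunc K) • d.map (RatFunc.C : K →+* RatFunc K)) := by
  rw [Matrix.isUnit_iff_isUnit_det]
  set M : Matrix n n (Polynomial K) :=
    1 - (Polynomial.X : Polynomial K) • d.map (Polynomial.C) with hM
  have hmap : (1 - (RatFunc.X : RatFunc K) • d.map (RatFunc.C : K →+* RatFunc K))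
      = M.map (algebraMap (Polynomial K) (RatFunc K)) := by
    ext i j
    simp only [hM, Matrix.map_apply, Matrix.sub_apply, Matrix.smul_apply, Matrix.one_apply,
      smul_eq_mul, map_sub, _root_.map_mul, RatFunc.algebraMap_C,
      RatFunc.algebraMap_X]
    split <;> simp
  have hdet0 : Polynomial.eval 0 M.det = 1 := by
    have h1 : (Polynomial.evalRingHom (0:K)) M.det
        = ((Polynomial.evalRingHom (0:K)).mapMatrix M).det := RingHom.map_det _ _
    have hM0 : (Polynomial.evalRingHom (0:K)).mapMatrix M = 1 := by
      ext i j
      simp [hM, Matrix.map_apply, Matrix.sub_apply, Matrix.smul_apply, Matrix.one_apply,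
        RingHom.mapMatrix_apply]
      split <;> simp
    rw [hM0, Matrix.det_one] at h1
    simpa using h1
  have hdet : M.det ≠ 0 := fun h => by simp [h] at hdet0
  rw [hmap, ← RingHom.mapMatrix_apply, ← RingHom.map_det]
  exact (isUnit_iff_ne_zero).2 (fun h => hdet (RatFunc.algebraMap_injective K (by simpa using h)))

/-- Realizability with prescribed constant coefficient. -/
def RlzA (A : Matrix (Fin α) (Fin α) K) (W : Matrix (Fin α) (Fin α) (RatFunc K)) : Prop :=
  ∃ (n : Type) (_ : Fintype n) (_ : DecidableEq n) (b : Matrix (Fin α) n K)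
    (c : Matrix n (Fin α) K) (d : Matrix n n K) (E : Matrix n n (RatFunc K)),
    E * (1 - (RatFunc.X : RatFunc K) • d.map (RatFunc.C : K →+* RatFunc K)) = 1 ∧
    (1 - (RatFunc.X : RatFunc K) • d.map (RatFunc.C : K →+* RatFunc K)) * E = 1 ∧
    W = A.map (RatFunc.C : K →+* RatFunc K)
      + (RatFunc.X : RatFunc K) • (b.map (RatFunc.C : K →+* RatFunc K) * E
          * c.map (RatFunc.C : K →+* RatFunc K))

def Rlz (W : Matrix (Fin α) (Fin α) (RatFunc K)) : Prop := ∃ A, RlzA A W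

lemma map_fromCols {m n₁ n₂ : Type} (f : K → RatFunc K) (A : Matrix m n₁ K)
    (B : Matrix m n₂ K) :
    (Matrix.fromCols A B).map f = Matrix.fromCols (A.map f) (B.map f) := by
  ext _ (_ | _) <;> rfl

lemma map_fromRows {m₁ m₂ n : Type} (f : K → RatFunc K) (A : Matrix m₁ n K)
    (B : Matrix m₂ n K) :
    (Matrix.fromRows A B).map f = Matrix.fromRows (A.map f) (B.map f) := by
  ext (_ | _) _ <;> rfl

lemma fromBlocks_sub' {l m o p : Type} {R : Type*} [AddGroup R] (A : Matrix l m R)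
    (B : Matrix l o R) (C : Matrix p m R) (D : Matrix p o R) (A' : Matrix l m R)
    (B' : Matrix l o R) (C' : Matrix p m R) (D' : Matrix p o R) :
    Matrix.fromBlocks A B C D - Matrix.fromBlocks A' B' C' D'
      = Matrix.fromBlocks (A - A') (B - B') (C - C') (D - D') := by
  simp [sub_eq_add_neg, Matrix.fromBlocks_neg, Matrix.fromBlocks_add]

lemma rlz_const (A : Matrix (Fin α) (Fin α) K) :
    RlzA A (A.map (RatFunc.C : K →+* RatFunc K)) := by
  refine ⟨Empty, inferInstance, inferInstance, 0, 0, 0, 1, Subsingleton.elim _ _,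
    Subsingleton.elim _ _, ?_⟩
  have h0 : ((0 : Matrix (Fin α) Empty K).map (RatFunc.C : K →+* RatFunc K)
      * (1 : Matrix Empty Empty (RatFunc K))
      * (0 : Matrix Empty (Fin α) K).map (RatFunc.C : K →+* RatFunc K))
      = (0 : Matrix (Fin α) (Fin α) (RatFunc K)) := by
    ext i j
    simp [Matrix.mul_apply]
  rw [h0, smul_zero, add_zero]
lemma rlz_shift {V : Matrix (Fin α) (Fin α) (RatFunc K)} (A : Matrix (Fin α) (Fin α) K)
    (h : Rlz V) :
    RlzA A (A.map (RatFunc.C : K →+* RatFunc K) + (RatFunc.X : RatFunc K) • V) := by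
  obtain ⟨A₀, n, _, _, b, c, d, E, hE1, hE2, rfl⟩ := h
  set x : RatFunc K := RatFunc.X with hx
  set β := b.map (RatFunc.C : K →+* RatFunc K) with hβ
  set γ := c.map (RatFunc.C : K →+* RatFunc K) with hγ
  have hu : (1 - x • (Matrix.fromBlocks (0 : Matrix (Fin α) (Fin α) K) b 0 d).map (RatFunc.C : K →+* RatFunc K))
      = Matrix.fromBlocks 1 (-(x • β)) 0 (1 - x • d.map (RatFunc.C : K →+* RatFunc K)) := by
    rw [Matrix.fromBlocks_map, Matrix.fromBlocks_smul, ← Matrix.fromBlocks_one, fromBlocks_sub']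
    simp [hβ]
  refine ⟨Fin α ⊕ n, inferInstance, inferInstance,
    Matrix.fromCols 1 0, Matrix.fromRows A₀ c, Matrix.fromBlocks (0 : Matrix (Fin α) (Fin α) K) b 0 d,
    Matrix.fromBlocks 1 (x • (β * E)) 0 E, ?_, ?_, ?_⟩
  · rw [hu, Matrix.fromBlocks_multiply]
    simp [Matrix.smul_mul, Matrix.mul_assoc, hE1, hE2, ← Matrix.fromBlocks_one]
  · rw [hu, Matrix.fromBlocks_multiply]
    simp [Matrix.smul_mul, Matrix.mul_assoc, hE1, hE2, ← Matrix.fromBlocks_one]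
  · congr 1
    rw [map_fromCols, map_fromRows, Matrix.map_one (⇑(RatFunc.C : K →+* RatFunc K)) (map_zero _) (map_one _),
      Matrix.map_zero (⇑(RatFunc.C : K →+* RatFunc K)) (map_zero _), Matrix.fromCols_mul_fromBlocks,
      Matrix.fromCols_mul_fromRows]
    simp [Matrix.smul_mul, Matrix.mul_assoc, hx, hγ]
lemma rlz_mul {W₁ W₂ : Matrix (Fin α) (Fin α) (RatFunc K)}
    {A₁ A₂ : Matrix (Fin α) (Fin α) K} (h₁ : RlzA A₁ W₁) (h₂ : RlzA A₂ W₂) :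
    RlzA (A₁ * A₂) (W₁ * W₂) := by
  obtain ⟨n₁, _, _, b₁, c₁, d₁, E₁, hE11, hE12, rfl⟩ := h₁
  obtain ⟨n₂, _, _, b₂, c₂, d₂, E₂, hE21, hE22, rfl⟩ := h₂
  set x : RatFunc K := RatFunc.X with hx
  set β₁ := b₁.map (RatFunc.C : K →+* RatFunc K) with hβ₁
  set γ₁ := c₁.map (RatFunc.C : K →+* RatFunc K) with hγ₁
  set β₂ := b₂.map (RatFunc.C : K →+* RatFunc K) with hβ₂
  set γ₂ := c₂.map (RatFunc.C : K →+* RatFunc K) with hγ₂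
  have hG : (c₁ * b₂).map (RatFunc.C : K →+* RatFunc K) = γ₁ * β₂ := Matrix.map_mul
  have hu : (1 - x • (Matrix.fromBlocks d₁ (c₁ * b₂) 0 d₂).map (RatFunc.C : K →+* RatFunc K))
      = Matrix.fromBlocks (1 - x • d₁.map (RatFunc.C : K →+* RatFunc K)) (-(x • (γ₁ * β₂))) 0
          (1 - x • d₂.map (RatFunc.C : K →+* RatFunc K)) := by
    rw [Matrix.fromBlocks_map, Matrix.fromBlocks_smul, ← Matrix.fromBlocks_one, fromBlocks_sub',
      hG]
    simp
  refine ⟨n₁ ⊕ n₂, inferInstance, inferInstance,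
    Matrix.fromCols b₁ (A₁ * b₂), Matrix.fromRows (c₁ * A₂) c₂,
    Matrix.fromBlocks d₁ (c₁ * b₂) 0 d₂,
    Matrix.fromBlocks E₁ (x • (E₁ * (γ₁ * β₂) * E₂)) 0 E₂, ?_, ?_, ?_⟩
  · rw [hu, Matrix.fromBlocks_multiply]
    simp [Matrix.smul_mul, Matrix.mul_smul, Matrix.mul_assoc, hE11, hE21,
      ← Matrix.fromBlocks_one]
  · rw [hu, Matrix.fromBlocks_multiply]
    simp only [Matrix.smul_mul, Matrix.mul_smul, ← Matrix.mul_assoc, Matrix.mul_zero,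
      Matrix.zero_mul, Matrix.mul_one, Matrix.one_mul, hE12, hE22, Matrix.mul_neg,
      Matrix.neg_mul, smul_neg, add_zero, zero_add, smul_zero]
    rw [← Matrix.fromBlocks_one]
    abel
  · rw [map_fromCols, map_fromRows, Matrix.map_mul, Matrix.map_mul, Matrix.map_mul,
      Matrix.fromCols_mul_fromBlocks, Matrix.fromCols_mul_fromRows]
    simp only [Matrix.mul_add, Matrix.add_mul, Matrix.mul_smul, Matrix.smul_mul,
      Matrix.mul_assoc, smul_smul, smul_add, Matrix.zero_mul, Matrix.mul_zero, add_zero,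
      zero_add, Matrix.mul_one, Matrix.one_mul]
    abel
lemma rlz_inv {W : Matrix (Fin α) (Fin α) (RatFunc K)} {A A' : Matrix (Fin α) (Fin α) K}
    (h : RlzA A W) (h1 : A * A' = 1) (h2 : A' * A = 1) :
    ∃ V : Matrix (Fin α) (Fin α) (RatFunc K), W * V = 1 ∧ V * W = 1 ∧ RlzA A' V := by
  obtain ⟨n, _, _, b, c, d, E, hE1, hE2, rfl⟩ := h
  set x : RatFunc K := RatFunc.X with hx
  set β := b.map (RatFunc.C : K →+* RatFunc K) with hβ
  set γ := c.map (RatFunc.C : K →+* RatFunc K) with hγ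
  set α₁ := A.map (RatFunc.C : K →+* RatFunc K) with hα₁
  set α₂ := A'.map (RatFunc.C : K →+* RatFunc K) with hα₂
  have h1m : α₁ * α₂ = 1 := by
    rw [hα₁, hα₂, ← Matrix.map_mul, h1,
      Matrix.map_one (⇑(RatFunc.C : K →+* RatFunc K)) (map_zero _) (map_one _)]
  have h2m : α₂ * α₁ = 1 := by
    rw [hα₁, hα₂, ← Matrix.map_mul, h2,
      Matrix.map_one (⇑(RatFunc.C : K →+* RatFunc K)) (map_zero _) (map_one _)]
  have h1m' : ∀ M : Matrix (Fin α) (Fin α) (RatFunc K), α₁ * (α₂ * M) = M := fun M => by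
    rw [← Matrix.mul_assoc, h1m, Matrix.one_mul]
  set u := 1 - x • d.map (RatFunc.C : K →+* RatFunc K) with hudef
  set G := (c * A' * b).map (RatFunc.C : K →+* RatFunc K) with hGdef
  have hGm : G = γ * α₂ * β := by rw [hGdef, hγ, hα₂, hβ]; simp
  set u' := 1 - x • ((d - c * A' * b).map (RatFunc.C : K →+* RatFunc K)) with hu'def
  have hu'u : u' = u + x • G := by
    have hsub : (d - c * A' * b).map (RatFunc.C : K →+* RatFunc K)
        = d.map (RatFunc.C : K →+* RatFunc K) - G := by
      rw [hGdef]
      exact Matrix.map_sub (⇑(RatFunc.C : K →+* RatFunc K)) (fun a₁ a₂ => map_sub _ a₁ a₂) _ _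
    rw [hu'def, hudef, hsub, smul_sub]
    abel
  have hu'unit : IsUnit u' := unit_one_sub _
  set E' := u'⁻¹ with hE'def
  have hE'1 : E' * u' = 1 :=
    Matrix.nonsing_inv_mul _ ((Matrix.isUnit_iff_isUnit_det _).1 hu'unit)
  have hE'2 : u' * E' = 1 :=
    Matrix.mul_nonsing_inv _ ((Matrix.isUnit_iff_isUnit_det _).1 hu'unit)
  have k1 : E - E' = x • (E * G * E') := by
    have step : E * u' = 1 + x • (E * G) := by
      rw [hu'u, Matrix.mul_add, hE1, Matrix.mul_smul]
    calc E - E' = E * u' * E' - E' := by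
          rw [Matrix.mul_assoc, hE'2, Matrix.mul_one]
      _ = (1 + x • (E * G)) * E' - E' := by rw [step]
      _ = x • (E * G * E') := by
          rw [Matrix.add_mul, Matrix.one_mul, Matrix.smul_mul]
          abel
  have k2 : E - E' = x • (E' * G * E) := by
    have step : E' * u = 1 - x • (E' * G) := by
      have hu2 : u = u' - x • G := by rw [hu'u]; abel
      rw [hu2, Matrix.mul_sub, hE'1, Matrix.mul_smul]
    calc E - E' = E - E' * u * E := by rw [Matrix.mul_assoc, hE2, Matrix.mul_one]
      _ = E - (1 - x • (E' * G)) * E := by rw [step]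
      _ = x • (E' * G * E) := by
          rw [Matrix.sub_mul, Matrix.one_mul, Matrix.smul_mul]
          abel
  refine ⟨α₂ - x • (α₂ * β * E' * (γ * α₂)), ?_, ?_, ?_⟩
  · have expand : (α₁ + x • (β * E * γ)) * (α₂ - x • (α₂ * β * E' * (γ * α₂)))
        = 1 + x • (β * ((E - E') - x • (E * G * E')) * (γ * α₂)) := by
      rw [hGm]
      simp only [h1m', Matrix.mul_sub, Matrix.sub_mul, Matrix.add_mul, Matrix.mul_add,
        Matrix.mul_smul, Matrix.smul_mul, smul_smul, smul_sub, smul_add,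
        Matrix.mul_assoc, h1m, Matrix.one_mul]
      abel
    rw [expand, k1]
    simp
  · have expand : (α₂ - x • (α₂ * β * E' * (γ * α₂))) * (α₁ + x • (β * E * γ))
        = 1 + x • (α₂ * β * ((E - E') - x • (E' * G * E)) * γ) := by
      rw [hGm]
      simp only [h2m, Matrix.mul_sub, Matrix.sub_mul, Matrix.add_mul, Matrix.mul_add,
        Matrix.mul_smul, Matrix.smul_mul, smul_smul, smul_sub, smul_add,
        Matrix.mul_assoc, Matrix.one_mul, Matrix.mul_one]
      abel
    rw [expand, k2]
    simp
  · refine ⟨n, inferInstance, inferInstance, A' * b, -(c * A'), d - c * A' * b, E',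
      hE'1, hE'2, ?_⟩
    have hb : (A' * b).map (RatFunc.C : K →+* RatFunc K) = α₂ * β := by
      rw [hα₂, hβ]; simp
    have hc : (-(c * A')).map (RatFunc.C : K →+* RatFunc K) = -(γ * α₂) := by
      rw [hγ, hα₂]
      have : (-(c * A')).map (RatFunc.C : K →+* RatFunc K)
          = -((c * A').map (RatFunc.C : K →+* RatFunc K)) := by
        ext i j
        simp only [Matrix.map_apply, Matrix.neg_apply, map_neg]
      rw [this]; simp
    rw [hb, hc, Matrix.mul_neg, smul_neg]
    simp only [Matrix.mul_assoc]
    abel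
lemma rlz_poly (P : Matrix (Fin α) (Fin α) (Polynomial K)) :
    Rlz (P.map (algebraMap (Polynomial K) (RatFunc K))) := by
  suffices H : ∀ (N : ℕ) (P : Matrix (Fin α) (Fin α) (Polynomial K)),
      (∀ i j, (P i j).natDegree ≤ N) → Rlz (P.map (algebraMap (Polynomial K) (RatFunc K))) by
    exact H (Finset.univ.sup fun ij : Fin α × Fin α => (P ij.1 ij.2).natDegree) P
      (fun i j => Finset.le_sup (f := fun ij : Fin α × Fin α => (P ij.1 ij.2).natDegree)
        (Finset.mem_univ (i, j)))
  intro N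
  induction N with
  | zero =>
    intro P hP
    have hPC : P.map (algebraMap (Polynomial K) (RatFunc K))
        = (Matrix.of fun i j => (P i j).coeff 0).map (RatFunc.C : K →+* RatFunc K) := by
      ext i j
      simp only [Matrix.map_apply, Matrix.of_apply]
      conv_lhs => rw [Polynomial.eq_C_of_natDegree_le_zero (hP i j)]
      rw [RatFunc.algebraMap_C]
    rw [hPC]
    exact ⟨_, rlz_const _⟩
  | succ N ih =>
    intro P hP
    have hdeg : ∀ i j, ((P i j).divX).natDegree ≤ N := by
      intro i j
      have h1 : ((P i j).divX).natDegree = (P i j).natDegree - 1 :=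
        Polynomial.natDegree_divX_eq_natDegree_tsub_one
      have := hP i j
      omega
    have hV := ih (Matrix.of fun i j => (P i j).divX) hdeg
    have key : P.map (algebraMap (Polynomial K) (RatFunc K))
        = (Matrix.of fun i j => (P i j).coeff 0).map (RatFunc.C : K →+* RatFunc K)
          + (RatFunc.X : RatFunc K)
            • ((Matrix.of fun i j => (P i j).divX).map (algebraMap (Polynomial K) (RatFunc K))) := by
      ext i j
      simp only [Matrix.map_apply, Matrix.add_apply, Matrix.smul_apply, smul_eq_mul, Matrix.of_apply]
      conv_lhs => rw [← Polynomial.X_mul_divX_add (P i j)]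
      rw [map_add, _root_.map_mul, RatFunc.algebraMap_C, RatFunc.algebraMap_X]
      ring
    rw [key]
    exact ⟨_, rlz_shift _ hV⟩

lemma rlz_smul_poly (q : Polynomial K) (hq0 : Polynomial.eval 0 q ≠ 0) :
    ∃ V : Matrix (Fin α) (Fin α) (RatFunc K),
      (algebraMap (Polynomial K) (RatFunc K) q) • (1 : Matrix (Fin α) (Fin α) (RatFunc K)) * V
          = 1 ∧
      Rlz V := by
  set aq := algebraMap (Polynomial K) (RatFunc K) q with haq
  set q₀ := Polynomial.eval 0 q with hq₀
  -- decomposition of the scalar matrix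
  have key : aq • (1 : Matrix (Fin α) (Fin α) (RatFunc K))
      = (q₀ • (1 : Matrix (Fin α) (Fin α) K)).map (RatFunc.C : K →+* RatFunc K)
        + (RatFunc.X : RatFunc K)
          • ((q.divX • (1 : Matrix (Fin α) (Fin α) (Polynomial K))).map
              (algebraMap (Polynomial K) (RatFunc K))) := by
    ext i j
    simp only [Matrix.map_apply, Matrix.add_apply, Matrix.smul_apply, Matrix.one_apply,
      smul_eq_mul, haq, hq₀]
    by_cases h : i = j
    · simp only [h, if_pos rfl, mul_one]
      conv_lhs => rw [← Polynomial.X_mul_divX_add q]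
      rw [map_add, _root_.map_mul, RatFunc.algebraMap_C, RatFunc.algebraMap_X,
        Polynomial.coeff_zero_eq_eval_zero]
      simp
      ring
    · simp [h]
  have hRA : RlzA (q₀ • (1 : Matrix (Fin α) (Fin α) K))
      (aq • (1 : Matrix (Fin α) (Fin α) (RatFunc K))) := by
    rw [key]
    exact rlz_shift _ (rlz_poly _)
  have h1 : (q₀ • (1 : Matrix (Fin α) (Fin α) K)) * (q₀⁻¹ • (1 : Matrix (Fin α) (Fin α) K))
      = 1 := by
    rw [Matrix.smul_mul, Matrix.mul_smul, smul_smul, Matrix.mul_one, mul_inv_cancel₀ hq0,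
      one_smul]
  have h2 : (q₀⁻¹ • (1 : Matrix (Fin α) (Fin α) K)) * (q₀ • (1 : Matrix (Fin α) (Fin α) K))
      = 1 := by
    rw [Matrix.smul_mul, Matrix.mul_smul, smul_smul, Matrix.mul_one, inv_mul_cancel₀ hq0,
      one_smul]
  obtain ⟨V, hV1, hV2, hVr⟩ := rlz_inv hRA h1 h2
  exact ⟨V, hV1, ⟨_, hVr⟩⟩

end ColligationAux

/-- Over an algebraically closed field, every matrix-valued rational function regular at `0`
is the characteristic function of a colligation. -/
theorem exists_colligation_of_regular_at_zero {K : Type*} [Field K] [IsAlgClosed K] {α : ℕ}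
    (W : Matrix (Fin α) (Fin α) (RatFunc K))
    (hW : ∀ i j, Polynomial.eval 0 (RatFunc.denom (W i j)) ≠ 0) :
    ∃ (N : ℕ) (a : Matrix (Fin α) (Fin α) K) (b : Matrix (Fin α) (Fin N) K)
      (c : Matrix (Fin N) (Fin α) K) (d : Matrix (Fin N) (Fin N) K),
      IsUnit (1 - (RatFunc.X : RatFunc K) • d.map (RatFunc.C : K →+* RatFunc K)) ∧
      W = a.map (RatFunc.C : K →+* RatFunc K)
        + (RatFunc.X : RatFunc K) • (b.map (RatFunc.C : K →+* RatFunc K)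
          * (1 - (RatFunc.X : RatFunc K) • d.map (RatFunc.C : K →+* RatFunc K))⁻¹
          * c.map (RatFunc.C : K →+* RatFunc K)) := by
  classical
  set q : Polynomial K := ∏ ij : Fin α × Fin α, (W ij.1 ij.2).denom with hqdef
  have hq0 : Polynomial.eval 0 q ≠ 0 := by
    rw [hqdef, Polynomial.eval_prod]
    exact Finset.prod_ne_zero_iff.2 fun ij _ => hW ij.1 ij.2
  have hdvd : ∀ i j, (W i j).denom ∣ q := fun i j =>
    Finset.dvd_prod_of_mem _ (Finset.mem_univ (i, j))
  have hqne : q ≠ 0 := fun h => hq0 (by rw [h]; simp)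
  have haqne : algebraMap (Polynomial K) (RatFunc K) q ≠ 0 := RatFunc.algebraMap_ne_zero hqne
  set P : Matrix (Fin α) (Fin α) (Polynomial K) :=
    Matrix.of fun i j => (W i j).num * (q / (W i j).denom) with hPdef
  have hPW : ∀ i j, algebraMap (Polynomial K) (RatFunc K) (P i j)
      = algebraMap (Polynomial K) (RatFunc K) q * W i j := by
    intro i j
    have hden : algebraMap (Polynomial K) (RatFunc K) (W i j).denom ≠ 0 :=
      RatFunc.algebraMap_ne_zero (RatFunc.denom_ne_zero _)
    have hcan : (W i j).denom * (q / (W i j).denom) = q :=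
      EuclideanDomain.mul_div_cancel' (RatFunc.denom_ne_zero _) (hdvd i j)
    conv_rhs => rw [← RatFunc.num_div_denom (W i j), ← hcan]
    have hPij : P i j = (W i j).num * (q / (W i j).denom) := rfl
    rw [hPij, _root_.map_mul, _root_.map_mul,
      mul_comm ((algebraMap (Polynomial K) (RatFunc K)) (W i j).denom), mul_assoc,
      mul_div_assoc', mul_div_cancel_left₀ _ hden]
    ring
  obtain ⟨V, hV1, hVr⟩ := rlz_smul_poly (α := α) q hq0
  have hsmulV : algebraMap (Polynomial K) (RatFunc K) q • V = 1 := by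
    rw [← Matrix.one_mul V, ← Matrix.smul_mul]
    exact hV1
  have hVeq : V = (algebraMap (Polynomial K) (RatFunc K) q)⁻¹
      • (1 : Matrix (Fin α) (Fin α) (RatFunc K)) := by
    rw [← hsmulV, smul_smul, inv_mul_cancel₀ haqne, one_smul]
  have hWeq : W = P.map (algebraMap (Polynomial K) (RatFunc K)) * V := by
    rw [hVeq, Matrix.mul_smul, Matrix.mul_one]
    ext i j
    rw [Matrix.smul_apply, Matrix.map_apply, hPW i j, smul_eq_mul, ← mul_assoc,
      inv_mul_cancel₀ haqne, one_mul]
  obtain ⟨AP, hAP⟩ := rlz_poly P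
  obtain ⟨AV, hAV⟩ := hVr
  have hfin : RlzA (AP * AV) W := by rw [hWeq]; exact rlz_mul hAP hAV
  obtain ⟨n, instF, instD, b, c, d, E, hE1, hE2, hWrep⟩ := hfin
  set e := Fintype.equivFin n with he
  have hu' : (1 : Matrix (Fin (Fintype.card n)) (Fin (Fintype.card n)) (RatFunc K))
      - (RatFunc.X : RatFunc K)
        • ((d.submatrix ⇑e.symm ⇑e.symm).map (RatFunc.C : K →+* RatFunc K))
      = (1 - (RatFunc.X : RatFunc K) • d.map (RatFunc.C : K →+* RatFunc K)).submatrix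
          ⇑e.symm ⇑e.symm := by
    ext i j
    simp only [Matrix.sub_apply, Matrix.smul_apply, Matrix.one_apply, Matrix.submatrix_apply,
      Matrix.map_apply, smul_eq_mul]
    congr 1
    simp [Equiv.apply_eq_iff_eq]
  have hinv : ((1 : Matrix (Fin (Fintype.card n)) (Fin (Fintype.card n)) (RatFunc K))
      - (RatFunc.X : RatFunc K)
        • ((d.submatrix ⇑e.symm ⇑e.symm).map (RatFunc.C : K →+* RatFunc K)))⁻¹
      = E.submatrix ⇑e.symm ⇑e.symm := by
    apply Matrix.inv_eq_right_inv
    rw [hu', Matrix.submatrix_mul_equiv _ _ _ e.symm _, hE2, Matrix.submatrix_one_equiv]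
  refine ⟨Fintype.card n, AP * AV, b.submatrix id ⇑e.symm, c.submatrix ⇑e.symm id,
    d.submatrix ⇑e.symm ⇑e.symm, unit_one_sub _, ?_⟩
  rw [hinv, ← Matrix.submatrix_map, ← Matrix.submatrix_map,
    Matrix.submatrix_mul_equiv _ _ _ e.symm _, Matrix.submatrix_mul_equiv _ _ _ e.symm _,
    Matrix.submatrix_id_id]
  exact hWrep
end

section
/- Let K be a field, g a block matrix over K indexed by Fin α ⊕ Fin N with blocks a,b,c,d, and let α₀, β₀, γ₀, δ₀ ∈ K with α₀δ₀ - β₀γ₀ ≠ 0. Suppose γ₀ • g + δ₀ • 1 is invertible and set h := (α₀ • g + β₀ • 1) * (γ₀ • g + δ₀ • 1)⁻¹, with blocks a_h, b_h, c_h, d_h. Let s ∈ K with γ₀*s + δ₀ ≠ 0 and set t := (α₀*s + β₀)/(γ₀*s + δ₀). Assume IsUnit (s • 1 - d), IsUnit (t • 1 - d_h), and that γ₀ • X + δ₀ • 1 is invertible where X := a + b * (s • 1 - d)⁻¹ * c. Then a_h + b_h * (t • 1 - d_h)⁻¹ * c_h = (α₀ • X + β₀ • 1) * (γ₀ • X +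 δ₀ • 1)⁻¹. (The characteristic function of a Möbius transform of a colligation is the corresponding Möbius transform of the characteristic function, evaluated at the Möbius-transformed point.) -/
open Matrix

/-- The characteristic function (in the coordinate `s = λ⁻¹`) of a Möbius transform of a
colligation is the corresponding Möbius transform of the characteristic function, evaluated
at the Möbius-transformed point. -/
theorem charFun_moebius {K : Type*} [Field K] {α N : ℕ}
    (g : Matrix (Fin α ⊕ Fin N) (Fin α ⊕ Fin N) K)
    (α₀ β₀ γ₀ δ₀ : K) (hdet : α₀ * δ₀ - β₀ * γ₀ ≠ 0)
    (hginv : IsUnit (γ₀ • g + δ₀ • (1 : Matrix (Fin α ⊕ Fin N) (Fin α ⊕ Fin N) K)))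
    (h : Matrix (Fin α ⊕ Fin N) (Fin α ⊕ Fin N) K)
    (hh : h = (α₀ • g + β₀ • 1) * (γ₀ • g + δ₀ • 1)⁻¹)
    (a : Matrix (Fin α) (Fin α) K) (b : Matrix (Fin α) (Fin N) K)
    (c : Matrix (Fin N) (Fin α) K) (d : Matrix (Fin N) (Fin N) K)
    (ha : a = g.toBlocks₁₁) (hb : b = g.toBlocks₁₂)
    (hc : c = g.toBlocks₂₁) (hd : d = g.toBlocks₂₂)
    (ah : Matrix (Fin α) (Fin α) K) (bh : Matrix (Fin α) (Fin N) K)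
    (ch : Matrix (Fin N) (Fin α) K) (dh : Matrix (Fin N) (Fin N) K)
    (hah : ah = h.toBlocks₁₁) (hbh : bh = h.toBlocks₁₂)
    (hch : ch = h.toBlocks₂₁) (hdh : dh = h.toBlocks₂₂)
    (s : K) (hs : γ₀ * s + δ₀ ≠ 0)
    (t : K) (ht : t = (α₀ * s + β₀) / (γ₀ * s + δ₀))
    (hsd : IsUnit (s • (1 : Matrix (Fin N) (Fin N) K) - d))
    (htdh : IsUnit (t • (1 : Matrix (Fin N) (Fin N) K) - dh))
    (X : Matrix (Fin α) (Fin α) K)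
    (hX : X = a + b * (s • (1 : Matrix (Fin N) (Fin N) K) - d)⁻¹ * c)
    (hXinv : IsUnit (γ₀ • X + δ₀ • (1 : Matrix (Fin α) (Fin α) K))) :
    ah + bh * (t • (1 : Matrix (Fin N) (Fin N) K) - dh)⁻¹ * ch
      = (α₀ • X + β₀ • 1) * (γ₀ • X + δ₀ • 1)⁻¹ := by
  set Dm : Matrix (Fin N) (Fin N) K := s • (1 : Matrix (Fin N) (Fin N) K) - d with hDm
  set Y : Matrix (Fin N) (Fin α) K := Dm⁻¹ * c with hY
  set P : Matrix (Fin α) (Fin α) K := γ₀ • X + δ₀ • (1 : Matrix (Fin α) (Fin α) K) with hP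
  set σ : K := γ₀ * s + δ₀ with hσ
  set W : Matrix (Fin N) (Fin α) K := σ • (Y * P⁻¹) with hW
  have hDdet : IsUnit Dm.det := (Matrix.isUnit_iff_isUnit_det Dm).mp hsd
  have hPdet : IsUnit P.det := (Matrix.isUnit_iff_isUnit_det P).mp hXinv
  have hGdet : IsUnit (γ₀ • g + δ₀ • (1 : Matrix (Fin α ⊕ Fin N) (Fin α ⊕ Fin N) K)).det :=
    (Matrix.isUnit_iff_isUnit_det _).mp hginv
  have hg : g = fromBlocks a b c d := by
    rw [ha, hb, hc, hd, Matrix.fromBlocks_toBlocks]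
  have hhblocks : h = fromBlocks ah bh ch dh := by
    rw [hah, hbh, hch, hdh, Matrix.fromBlocks_toBlocks]
  -- g * (fromRows 1 Y) = fromRows X (s • Y)
  have hDY : Dm * Y = c := by
    rw [hY, ← Matrix.mul_assoc, Matrix.mul_nonsing_inv _ hDdet, Matrix.one_mul]
  have hdY : c + d * Y = s • Y := by
    have : (s • (1 : Matrix (Fin N) (Fin N) K)) * Y - d * Y = c := by
      rw [← Matrix.sub_mul]; exact hDY
    rw [Matrix.smul_mul, Matrix.one_mul] at this
    rw [← this]; abel
  have hgU : g * fromRows (1 : Matrix (Fin α) (Fin α) K) Y = fromRows X (s • Y) := by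
    rw [hg, Matrix.fromBlocks_mul_fromRows, Matrix.mul_one, Matrix.mul_one, hdY, hX,
      Matrix.mul_assoc, ← hY]
  -- (γ₀ • g + δ₀ • 1) * U = fromRows P (σ • Y)
  have hGU : (γ₀ • g + δ₀ • (1 : Matrix (Fin α ⊕ Fin N) (Fin α ⊕ Fin N) K)) *
      fromRows (1 : Matrix (Fin α) (Fin α) K) Y = fromRows P (σ • Y) := by
    rw [Matrix.add_mul, Matrix.smul_mul, Matrix.smul_mul, hgU, Matrix.one_mul]
    ext (i | i) j <;>
      simp [hP, hσ, Matrix.add_apply, Matrix.smul_apply, mul_assoc,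
        add_mul, mul_comm]
  -- h * fromRows P (σ • Y) = fromRows (α₀ • X + β₀ • 1) ((α₀ * s + β₀) • Y)
  have hhGU : h * fromRows P (σ • Y)
      = fromRows (α₀ • X + β₀ • (1 : Matrix (Fin α) (Fin α) K)) ((α₀ * s + β₀) • Y) := by
    rw [← hGU, hh, Matrix.mul_assoc, ← Matrix.mul_assoc (γ₀ • g + δ₀ • 1)⁻¹,
      Matrix.nonsing_inv_mul _ hGdet, Matrix.one_mul, Matrix.add_mul,
      Matrix.smul_mul, Matrix.smul_mul, hgU, Matrix.one_mul]
    ext (i | i) j <;>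
      simp [Matrix.add_apply, Matrix.smul_apply, mul_assoc,
        add_mul, mul_comm]
  -- multiply by P⁻¹ on the right
  have hts : α₀ * s + β₀ = t * σ := by
    rw [ht, div_mul_cancel₀ _ hs]
  have key : h * fromRows (1 : Matrix (Fin α) (Fin α) K) W
      = fromRows ((α₀ • X + β₀ • 1) * P⁻¹) (t • W) := by
    have h1 : fromRows P (σ • Y) * P⁻¹ = fromRows (1 : Matrix (Fin α) (Fin α) K) W := by
      rw [Matrix.fromRows_mul, Matrix.mul_nonsing_inv _ hPdet, hW, Matrix.smul_mul]
    have h2 := congrArg (· * P⁻¹) hhGU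
    rw [Matrix.mul_assoc, h1, Matrix.fromRows_mul, Matrix.smul_mul] at h2
    rw [h2, hts, hW, smul_smul]
  rw [hhblocks, Matrix.fromBlocks_mul_fromRows, Matrix.mul_one, Matrix.mul_one,
    Matrix.fromRows_ext_iff] at key
  obtain ⟨key1, key2⟩ := key
  -- from key2 : ch + dh * W = t • W, deduce W = (t • 1 - dh)⁻¹ * ch
  have hWeq : (t • (1 : Matrix (Fin N) (Fin N) K) - dh) * W = ch := by
    rw [Matrix.sub_mul, Matrix.smul_mul, Matrix.one_mul, ← key2]
    abel
  have htdet : IsUnit (t • (1 : Matrix (Fin N) (Fin N) K) - dh).det :=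
    (Matrix.isUnit_iff_isUnit_det _).mp htdh
  have hWval : W = (t • (1 : Matrix (Fin N) (Fin N) K) - dh)⁻¹ * ch := by
    rw [← hWeq, ← Matrix.mul_assoc, Matrix.nonsing_inv_mul _ htdet, Matrix.one_mul]
  rw [Matrix.mul_assoc, ← hWval, key1, hP]
end

section
/- Let K be a field and a,b1,b2,c1,c2,p,q1,q2,r1,r2,l1,l2,m1,m2 ∈ K with l1,l2,m1,m2 pairwise distinct. Define the 5×5 matrices S := !![a*p, b1, b2, a*q1, a*q2; c1*p, l1, 0, c1*q1, c1*q2; c2*p, 0, l2, c2*q1, c2*q2; r1, 0, 0, m1, 0; r2, 0, 0, 0, m2] and T := !![a*p, b1*p, b2*p, q1, q2; c1, l1, 0, 0, 0; c2, 0, l2, 0, 0; a*r1, b1*r1, b2*r1, m1, 0; a*r2, b1*r2, b2*r2, 0, m2] (these are the two ∘-products g∘h and h∘g of the colligations g = !![a,b1,b2; c1,l1,0; c2,0,l2] and h = !![p,q1,q2; r1,m1,0; r2,0,m2]). Assume moreover that the four scalars p + q1*r1/(l1-m1) + q2*r2/(l1-m2), p + q1*r1/(l2-m1) + q2*r2/(l2-m2),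 a + b1*c1/(m1-l1) + b2*c2/(m1-l2), and a + b1*c1/(m2-l1) + b2*c2/(m2-l2) are all nonzero. Then there exists an invertible matrix U : Matrix (Fin 4) (Fin 4) K such that, with D := Matrix.fromBlocks (1 : Matrix (Fin 1) (Fin 1) K) 0 0 U (a 5×5 block matrix), D * T = S * D; i.e., T = D⁻¹ * S * D, so g∘h and h∘g lie in the same conjugacy class. -/
open Matrix

/-- The `1 ⊕ 4` block matrix `fromBlocks 1 0 0 U`, reindexed to `Fin 5`, written explicitly. -/
theorem reindex_fromBlocks_one_four {K : Type*} [Field K] (U : Matrix (Fin 4) (Fin 4) K) :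
    (Matrix.reindex finSumFinEquiv finSumFinEquiv
      (Matrix.fromBlocks (1 : Matrix (Fin 1) (Fin 1) K) 0 0 U)) =
    !![1,0,0,0,0; 0,U 0 0,U 0 1,U 0 2,U 0 3; 0,U 1 0,U 1 1,U 1 2,U 1 3;
       0,U 2 0,U 2 1,U 2 2,U 2 3; 0,U 3 0,U 3 1,U 3 2,U 3 3] := by
  ext i j
  fin_cases i <;> fin_cases j <;>
    simp [Matrix.reindex_apply, Matrix.submatrix_apply, Matrix.fromBlocks] <;> rfl

/-- Reindexing of `fromBlocks 1 0 0 _` is multiplicative. -/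
theorem reindex_fromBlocks_mul {K : Type*} [Field K] (A B : Matrix (Fin 4) (Fin 4) K) :
    (Matrix.reindex finSumFinEquiv finSumFinEquiv
        (Matrix.fromBlocks (1 : Matrix (Fin 1) (Fin 1) K) 0 0 A)) *
      (Matrix.reindex finSumFinEquiv finSumFinEquiv
        (Matrix.fromBlocks (1 : Matrix (Fin 1) (Fin 1) K) 0 0 B)) =
    Matrix.reindex finSumFinEquiv finSumFinEquiv
      (Matrix.fromBlocks (1 : Matrix (Fin 1) (Fin 1) K) 0 0 (A * B)) := by
  simp only [Matrix.reindex_apply, Matrix.submatrix_mul_equiv, Matrix.fromBlocks_multiply]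
  simp

/-- Conjugation chain helper. -/
theorem conj_chain {n : Type*} [Fintype n] [DecidableEq n] {K : Type*} [Field K]
    (A B C T S S' T' : Matrix n n K)
    (hC : C * T = T' * C) (hB : B * T' = S' * B) (hA : S * A = A * S') :
    (A * (B * C)) * T = S * (A * (B * C)) := by
  calc (A * (B * C)) * T = A * (B * (C * T)) := by simp [Matrix.mul_assoc]
    _ = A * (B * (T' * C)) := by rw [hC]
    _ = A * ((B * T') * C) := by simp [Matrix.mul_assoc]
    _ = A * ((S' * B) * C) := by rw [hB]
    _ = (A * S') * (B * C) := by simp [Matrix.mul_assoc]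
    _ = (S * A) * (B * C) := by rw [hA]
    _ = S * (A * (B * C)) := by simp [Matrix.mul_assoc]

set_option maxHeartbeats 8000000 in
/-- For `Coll(1)`, the two ∘-products `g∘h` and `h∘g` (in the generic diagonalized form)
lie in the same conjugacy class: there is an invertible `U` with
`fromBlocks 1 0 0 U * T = S * fromBlocks 1 0 0 U`. -/
theorem collProd_comm_conjugate {K : Type*} [Field K]
    (a b1 b2 c1 c2 p q1 q2 r1 r2 l1 l2 m1 m2 : K)
    (h12 : l1 ≠ l2) (h1m1 : l1 ≠ m1) (h1m2 : l1 ≠ m2)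
    (h2m1 : l2 ≠ m1) (h2m2 : l2 ≠ m2) (hm12 : m1 ≠ m2)
    (S T : Matrix (Fin 5) (Fin 5) K)
    (hS : S = !![a*p, b1, b2, a*q1, a*q2;
                 c1*p, l1, 0, c1*q1, c1*q2;
                 c2*p, 0, l2, c2*q1, c2*q2;
                 r1, 0, 0, m1, 0;
                 r2, 0, 0, 0, m2])
    (hT : T = !![a*p, b1*p, b2*p, q1, q2;
                 c1, l1, 0, 0, 0;
                 c2, 0, l2, 0, 0;
                 a*r1, b1*r1, b2*r1, m1, 0;
                 a*r2, b1*r2, b2*r2, 0, m2])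
    (h1 : p + q1*r1/(l1 - m1) + q2*r2/(l1 - m2) ≠ 0)
    (h2 : p + q1*r1/(l2 - m1) + q2*r2/(l2 - m2) ≠ 0)
    (h3 : a + b1*c1/(m1 - l1) + b2*c2/(m1 - l2) ≠ 0)
    (h4 : a + b1*c1/(m2 - l1) + b2*c2/(m2 - l2) ≠ 0) :
    ∃ U : Matrix (Fin 4) (Fin 4) K, IsUnit U ∧
      (Matrix.reindex finSumFinEquiv finSumFinEquiv
          (Matrix.fromBlocks (1 : Matrix (Fin 1) (Fin 1) K) 0 0 U)) * T
        = S * (Matrix.reindex finSumFinEquiv finSumFinEquiv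
            (Matrix.fromBlocks (1 : Matrix (Fin 1) (Fin 1) K) 0 0 U)) := by
  have d11 : l1 - m1 ≠ 0 := sub_ne_zero.2 h1m1
  have d12 : l1 - m2 ≠ 0 := sub_ne_zero.2 h1m2
  have d21 : l2 - m1 ≠ 0 := sub_ne_zero.2 h2m1
  have d22 : l2 - m2 ≠ 0 := sub_ne_zero.2 h2m2
  have e11 : m1 - l1 ≠ 0 := sub_ne_zero.2 (Ne.symm h1m1)
  have e21 : m1 - l2 ≠ 0 := sub_ne_zero.2 (Ne.symm h2m1)
  have e12 : m2 - l1 ≠ 0 := sub_ne_zero.2 (Ne.symm h1m2)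
  have e22 : m2 - l2 ≠ 0 := sub_ne_zero.2 (Ne.symm h2m2)
  have hM1 : (p*(l1-m1)+q1*r1)*(l1-m2)+q2*r2*(l1-m1) ≠ 0 := by
    intro h; apply h1; field_simp; linear_combination h
  have hM2 : (p*(l2-m1)+q1*r1)*(l2-m2)+q2*r2*(l2-m1) ≠ 0 := by
    intro h; apply h2; field_simp; linear_combination h
  have hN1 : (a*(m1-l1)+b1*c1)*(m1-l2)+b2*c2*(m1-l1) ≠ 0 := by
    intro h; apply h3; field_simp; linear_combination h
  have hN2 : (a*(m2-l1)+b1*c1)*(m2-l2)+b2*c2*(m2-l1) ≠ 0 := by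
    intro h; apply h4; field_simp; linear_combination h
  have hPSQS : (!![1,0,c1*q1/(m1-l1), c1*q2/(m2-l1); 0,1,c2*q1/(m1-l2), c2*q2/(m2-l2); 0,0,1,0; 0,0,0,1] : Matrix (Fin 4) (Fin 4) K) * !![1,0,-(c1*q1/(m1-l1)), -(c1*q2/(m2-l1)); 0,1,-(c2*q1/(m1-l2)), -(c2*q2/(m2-l2)); 0,0,1,0; 0,0,0,1] = 1 := by
    ext i j
    fin_cases i <;> fin_cases j <;>
      · simp [Matrix.mul_apply, Fin.sum_univ_four, Matrix.one_apply, Matrix.vecHead, Matrix.vecTail]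
        try field_simp
        try ring
  have hQTPT : (!![1,0,0,0; 0,1,0,0; -(b1*r1/(l1-m1)), -(b2*r1/(l2-m1)),1,0; -(b1*r2/(l1-m2)), -(b2*r2/(l2-m2)),0,1] : Matrix (Fin 4) (Fin 4) K) * !![1,0,0,0; 0,1,0,0; b1*r1/(l1-m1), b2*r1/(l2-m1),1,0; b1*r2/(l1-m2), b2*r2/(l2-m2),0,1] = 1 := by
    ext i j
    fin_cases i <;> fin_cases j <;>
      · simp [Matrix.mul_apply, Fin.sum_univ_four, Matrix.one_apply, Matrix.vecHead, Matrix.vecTail]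
        try field_simp
        try ring
  have hDDi : (!![(p + q1*r1/(l1 - m1) + q2*r2/(l1 - m2)),0,0,0; 0,(p + q1*r1/(l2 - m1) + q2*r2/(l2 - m2)),0,0; 0,0,1/(a + b1*c1/(m1 - l1) + b2*c2/(m1 - l2)),0; 0,0,0,1/(a + b1*c1/(m2 - l1) + b2*c2/(m2 - l2))] : Matrix (Fin 4) (Fin 4) K) * !![1/(p + q1*r1/(l1 - m1) + q2*r2/(l1 - m2)),0,0,0; 0,1/(p + q1*r1/(l2 - m1) + q2*r2/(l2 - m2)),0,0; 0,0,(a + b1*c1/(m1 - l1) + b2*c2/(m1 - l2)),0; 0,0,0,(a + b1*c1/(m2 - l1) + b2*c2/(m2 - l2))] = 1 := by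
    ext i j
    fin_cases i <;> fin_cases j <;>
      · simp [Matrix.mul_apply, Fin.sum_univ_four, Matrix.one_apply, Matrix.vecHead, Matrix.vecTail]
        try first
        | exact mul_inv_cancel₀ h1
        | exact mul_inv_cancel₀ h2
        | exact inv_mul_cancel₀ h3
        | exact inv_mul_cancel₀ h4
        | exact div_self hM1
        | exact div_self hM2
        | exact (div_eq_one_iff_eq (mul_ne_zero hN1 (mul_ne_zero e11 e21))).mpr (by ring)
        | exact (div_eq_one_iff_eq (mul_ne_zero hN2 (mul_ne_zero e12 e22))).mpr (by ring)
  have hSPS : S * (Matrix.reindex finSumFinEquiv finSumFinEquiv (Matrix.fromBlocks (1 : Matrix (Fin 1) (Fin 1) K) 0 0 (!![1,0,c1*q1/(m1-l1), c1*q2/(m2-l1); 0,1,c2*q1/(m1-l2), c2*q2/(m2-l2); 0,0,1,0; 0,0,0,1] : Matrix (Fin 4) (Fin 4) K))) = (Matrix.reindex finSumFinEquiv finSumFinEquiv (Matrix.fromBlocks (1 : Matrix (Fin 1) (Fin 1) K) 0 0 (!![1,0,c1*q1/(m1-l1), c1*q2/(m2-l1); 0,1,c2*q1/(m1-l2), c2*q2/(m2-l2);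 0,0,1,0; 0,0,0,1] : Matrix (Fin 4) (Fin 4) K))) * (!![a*p, b1, b2, q1*(a + b1*c1/(m1 - l1) + b2*c2/(m1 - l2)), q2*(a + b1*c1/(m2 - l1) + b2*c2/(m2 - l2)); c1*(p + q1*r1/(l1 - m1) + q2*r2/(l1 - m2)), l1,0,0,0; c2*(p + q1*r1/(l2 - m1) + q2*r2/(l2 - m2)),0,l2,0,0; r1,0,0,m1,0; r2,0,0,0,m2] : Matrix (Fin 5) (Fin 5) K) := by
    rw [hS]
    simp only [reindex_fromBlocks_one_four]
    ext i j
    fin_cases i <;> fin_cases j <;>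
      · simp [Matrix.mul_apply, Fin.sum_univ_five, Matrix.vecHead, Matrix.vecTail]
        try field_simp
        try ring
  have hQTT : (Matrix.reindex finSumFinEquiv finSumFinEquiv (Matrix.fromBlocks (1 : Matrix (Fin 1) (Fin 1) K) 0 0 (!![1,0,0,0; 0,1,0,0; -(b1*r1/(l1-m1)), -(b2*r1/(l2-m1)),1,0; -(b1*r2/(l1-m2)), -(b2*r2/(l2-m2)),0,1] : Matrix (Fin 4) (Fin 4) K))) * T = (!![a*p, b1*(p + q1*r1/(l1 - m1) + q2*r2/(l1 - m2)), b2*(p + q1*r1/(l2 - m1) + q2*r2/(l2 - m2)), q1, q2; c1,l1,0,0,0; c2,0,l2,0,0; r1*(a + b1*c1/(m1 - l1) + b2*c2/(m1 - l2)),0,0,m1,0; r2*(a + b1*c1/(m2 - l1) + b2*c2/(m2 - l2)),0,0,0,m2] : Matrix (Fin 5) (Fin 5) K) * (Matrix.reindex finSumFinEquiv finSumFinEquiv (Matrix.fromBlocks (1 : Matrix (Fin 1) (Fin 1) K) 0 0 (!![1,0,0,0; 0,1,0,0; -(b1*r1/(l1-m1)), -(b2*r1/(l2-m1)),1,0; -(b1*r2/(l1-m2)),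 -(b2*r2/(l2-m2)),0,1] : Matrix (Fin 4) (Fin 4) K))) := by
    rw [hT]
    simp only [reindex_fromBlocks_one_four]
    ext i j
    fin_cases i <;> fin_cases j <;>
      · simp [Matrix.mul_apply, Fin.sum_univ_five, Matrix.vecHead, Matrix.vecTail]
        try field_simp
        try ring
  have hDT : (Matrix.reindex finSumFinEquiv finSumFinEquiv (Matrix.fromBlocks (1 : Matrix (Fin 1) (Fin 1) K) 0 0 (!![(p + q1*r1/(l1 - m1) + q2*r2/(l1 - m2)),0,0,0; 0,(p + q1*r1/(l2 - m1) + q2*r2/(l2 - m2)),0,0; 0,0,1/(a + b1*c1/(m1 - l1) + b2*c2/(m1 - l2)),0; 0,0,0,1/(a + b1*c1/(m2 - l1) + b2*c2/(m2 - l2))] : Matrix (Fin 4) (Fin 4) K))) * (!![a*p, b1*(p + q1*r1/(l1 - m1) + q2*r2/(l1 - m2)), b2*(p + q1*r1/(l2 - m1) + q2*r2/(l2 - m2)), q1, q2; c1,l1,0,0,0; c2,0,l2,0,0; r1*(a + b1*c1/(m1 - l1) + b2*c2/(m1 - l2)),0,0,m1,0; r2*(a + b1*c1/(m2 - l1) +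 b2*c2/(m2 - l2)),0,0,0,m2] : Matrix (Fin 5) (Fin 5) K) = (!![a*p, b1, b2, q1*(a + b1*c1/(m1 - l1) + b2*c2/(m1 - l2)), q2*(a + b1*c1/(m2 - l1) + b2*c2/(m2 - l2)); c1*(p + q1*r1/(l1 - m1) + q2*r2/(l1 - m2)), l1,0,0,0; c2*(p + q1*r1/(l2 - m1) + q2*r2/(l2 - m2)),0,l2,0,0; r1,0,0,m1,0; r2,0,0,0,m2] : Matrix (Fin 5) (Fin 5) K) * (Matrix.reindex finSumFinEquiv finSumFinEquiv (Matrix.fromBlocks (1 : Matrix (Fin 1) (Fin 1) K) 0 0 (!![(p + q1*r1/(l1 - m1) + q2*r2/(l1 - m2)),0,0,0; 0,(p + q1*r1/(l2 - m1) + q2*r2/(l2 - m2)),0,0; 0,0,1/(a + b1*c1/(m1 - l1) + b2*c2/(m1 - l2)),0; 0,0,0,1/(a + b1*c1/(m2 - l1) + b2*c2/(m2 - l2))] : Matrix (Fin 4) (Fin 4) K))) := by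
    simp only [reindex_fromBlocks_one_four]
    ext i j
    fin_cases i <;> fin_cases j <;>
      · simp [Matrix.mul_apply, Fin.sum_univ_five, Matrix.vecHead, Matrix.vecTail]
        try simp only [mul_left_comm _ r1, mul_left_comm _ r2, inv_mul_cancel₀ h3, inv_mul_cancel₀ h4, mul_inv_cancel_right₀ h3, mul_inv_cancel_right₀ h4, mul_one]
        try field_simp
        try ring
  refine ⟨!![1,0,c1*q1/(m1-l1), c1*q2/(m2-l1); 0,1,c2*q1/(m1-l2), c2*q2/(m2-l2); 0,0,1,0; 0,0,0,1] * ((!![(p + q1*r1/(l1 - m1) + q2*r2/(l1 - m2)),0,0,0; 0,(p + q1*r1/(l2 - m1) + q2*r2/(l2 - m2)),0,0; 0,0,1/(a + b1*c1/(m1 - l1) + b2*c2/(m1 - l2)),0; 0,0,0,1/(a + b1*c1/(m2 - l1) + b2*c2/(m2 - l2))]) * !![1,0,0,0; 0,1,0,0; -(b1*r1/(l1-m1)), -(b2*r1/(l2-m1)),1,0; -(b1*r2/(l1-m2)), -(b2*r2/(l2-m2)),0,1]), ?_, ?_⟩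
  · have h1u : IsUnit (!![1,0,c1*q1/(m1-l1), c1*q2/(m2-l1); 0,1,c2*q1/(m1-l2), c2*q2/(m2-l2); 0,0,1,0; 0,0,0,1] : Matrix (Fin 4) (Fin 4) K) :=
      @isUnit_of_invertible _ _ _ (invertibleOfRightInverse _ _ hPSQS)
    have h2u : IsUnit (!![(p + q1*r1/(l1 - m1) + q2*r2/(l1 - m2)),0,0,0; 0,(p + q1*r1/(l2 - m1) + q2*r2/(l2 - m2)),0,0; 0,0,1/(a + b1*c1/(m1 - l1) + b2*c2/(m1 - l2)),0; 0,0,0,1/(a + b1*c1/(m2 - l1) + b2*c2/(m2 - l2))] : Matrix (Fin 4) (Fin 4) K) :=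
      @isUnit_of_invertible _ _ _ (invertibleOfRightInverse _ _ hDDi)
    have h3u : IsUnit (!![1,0,0,0; 0,1,0,0; -(b1*r1/(l1-m1)), -(b2*r1/(l2-m1)),1,0; -(b1*r2/(l1-m2)), -(b2*r2/(l2-m2)),0,1] : Matrix (Fin 4) (Fin 4) K) :=
      @isUnit_of_invertible _ _ _ (invertibleOfRightInverse _ _ hQTPT)
    exact h1u.mul (h2u.mul h3u)
  · rw [← reindex_fromBlocks_mul, ← reindex_fromBlocks_mul]
    exact conj_chain _ _ _ _ _ _ _ hQTT hDT hSPS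
end

section
/- Let K be an infinite field and u v : Polynomial K with v ≠ 0 and Polynomial.eval 0 v ≠ 0. Then there exist N : ℕ and a : Matrix (Fin 1) (Fin 1) K, b : Matrix (Fin 1) (Fin N) K, c : Matrix (Fin N) (Fin 1) K, d : Matrix (Fin N) (Fin N) K such that, in Matrix (Fin 1) (Fin 1) (RatFunc K), the matrix 1 - RatFunc.X • d.map RatFunc.C is invertible and (a.map RatFunc.C + RatFunc.X • (b.map RatFunc.C * (1 - RatFunc.X • d.map RatFunc.C)⁻¹ * c.map RatFunc.C)) 0 0 = algebraMap (Polynomial K) (RatFunc K) u / algebraMap (Polynomial K) (RatFunc K) v. (Every scalar rational function regular at 0 over an infinite field is the characteristic function of an element of Coll(1).) -/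
open Matrix Polynomial

set_option synthInstance.maxHeartbeats 1000000
set_option maxHeartbeats 2000000

-- auxiliary: the polynomial key identity
theorem aux_key {K : Type*} [Field K] (v w : Polynomial K) (n : ℕ) (s : ℕ → K)
    (hwn : w.natDegree < n)
    (hcoeff : ∀ m : ℕ, w.coeff m = ∑ k ∈ Finset.range (m+1), v.coeff k * s (m - k)) :
    w = ∑ k ∈ Finset.range (n+1), Polynomial.C (v.coeff k) *
      ((∑ m ∈ Finset.range (n - k), Polynomial.C (s m) * Polynomial.X ^ m) * Polynomial.X ^ k) := by
  have hPcoeff : ∀ k j : ℕ,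
      (∑ m ∈ Finset.range k, Polynomial.C (s m) * Polynomial.X ^ m).coeff j
        = if j < k then s j else 0 := by
    intro k j
    rw [Polynomial.finset_sum_coeff]
    simp only [Polynomial.coeff_C_mul, Polynomial.coeff_X_pow, mul_ite, mul_one, mul_zero]
    rw [Finset.sum_ite_eq (Finset.range k) j s]
    simp [Finset.mem_range]
  apply Polynomial.ext; intro m
  rw [Polynomial.finset_sum_coeff]
  simp only [Polynomial.coeff_C_mul, Polynomial.coeff_mul_X_pow', hPcoeff]
  by_cases hm : m < n
  · rw [hcoeff m]
    rw [← Finset.sum_subset (Finset.range_subset_range.mpr (by omega : m + 1 ≤ n + 1))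
      (fun k _ hk => by
        have : ¬ k ≤ m := by simp only [Finset.mem_range] at hk ⊢; omega
        rw [if_neg this, mul_zero])]
    refine Finset.sum_congr rfl fun k hk => ?_
    have hk' : k ≤ m := by simpa [Nat.lt_succ_iff] using Finset.mem_range.mp hk
    rw [if_pos hk', if_pos (by omega)]
  · rw [Polynomial.coeff_eq_zero_of_natDegree_lt (by omega : w.natDegree < m)]
    refine (Finset.sum_eq_zero fun k _ => ?_).symm
    rcases le_or_gt k m with h | h
    · rw [if_pos h, if_neg (by omega), mul_zero]
    · rw [if_neg (by omega), mul_zero]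

-- power series coefficients give the recurrence
theorem aux_coeff {K : Type*} [Field K] (v w : Polynomial K) (hv0 : v.coeff 0 ≠ 0) :
    ∀ m : ℕ, w.coeff m = ∑ k ∈ Finset.range (m+1),
      v.coeff k * (PowerSeries.coeff (m - k) ((w : PowerSeries K) * (v : PowerSeries K)⁻¹)) := by
  have hvS : (v : PowerSeries K) * ((w : PowerSeries K) * (v : PowerSeries K)⁻¹)
      = (w : PowerSeries K) := by
    rw [mul_comm (w : PowerSeries K), ← mul_assoc, PowerSeries.mul_inv_cancel, one_mul]
    rwa [Polynomial.constantCoeff_coe]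
  intro m
  have h1 := congrArg (PowerSeries.coeff m) hvS
  rw [PowerSeries.coeff_mul, Finset.Nat.sum_antidiagonal_eq_sum_range_succ_mk] at h1
  simp only [Polynomial.coeff_coe] at h1
  rw [← h1]

set_option maxHeartbeats 4000000 in
/-- Over an infinite field, every scalar rational function regular at `0` is the
characteristic function of an element of `Coll(1)`. -/
theorem exists_colligation_of_rational_regular_at_zero {K : Type*} [Field K] [Infinite K]
    (u v : Polynomial K) (hv : v ≠ 0) (hv0 : Polynomial.eval 0 v ≠ 0) :
    ∃ (N : ℕ) (a : Matrix (Fin 1) (Fin 1) K) (b : Matrix (Fin 1) (Fin N) K)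
      (c : Matrix (Fin N) (Fin 1) K) (d : Matrix (Fin N) (Fin N) K),
      IsUnit (1 - (RatFunc.X : RatFunc K) • d.map (RatFunc.C : K →+* RatFunc K)) ∧
      (a.map (RatFunc.C : K →+* RatFunc K)
        + (RatFunc.X : RatFunc K) • (b.map (RatFunc.C : K →+* RatFunc K)
          * (1 - (RatFunc.X : RatFunc K) • d.map (RatFunc.C : K →+* RatFunc K))⁻¹
          * c.map (RatFunc.C : K →+* RatFunc K))) 0 0
        = algebraMap (Polynomial K) (RatFunc K) u / algebraMap (Polynomial K) (RatFunc K) v := by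
  classical
  have hv0' : v.coeff 0 ≠ 0 := by rwa [Polynomial.coeff_zero_eq_eval_zero]
  set n : ℕ := max u.natDegree v.natDegree + 1 with hn
  have hn0 : 0 < n := Nat.succ_pos _
  set a : K := u.coeff 0 / v.coeff 0 with ha
  set w : Polynomial K := (u - Polynomial.C a * v).divX with hwdef
  have hw : Polynomial.X * w = u - Polynomial.C a * v := by
    have h0 : (u - Polynomial.C a * v).coeff 0 = 0 := by
      simp only [Polynomial.coeff_sub, Polynomial.coeff_C_mul, ha]
      rw [div_mul_cancel₀ _ hv0', sub_self]
    have h1 := Polynomial.X_mul_divX_add (u - Polynomial.C a * v)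
    rwa [h0, map_zero, add_zero] at h1
  have hvn : v.natDegree < n + 1 := by
    have := le_max_right u.natDegree v.natDegree; omega
  have hwn : w.natDegree < n := by
    have h1 : ((u - Polynomial.C a * v).divX).natDegree
        ≤ (u - Polynomial.C a * v).natDegree := Polynomial.natDegree_divX_le
    have h2 := Polynomial.natDegree_sub_le u (Polynomial.C a * v)
    have h3 := Polynomial.natDegree_C_mul_le a v
    have h4 := le_max_left u.natDegree v.natDegree
    have h5 := le_max_right u.natDegree v.natDegree
    rw [← hwdef] at h1
    omega
  set s : ℕ → K := fun m =>
    PowerSeries.coeff m ((w : PowerSeries K) * (v : PowerSeries K)⁻¹) with hs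
  have hcoeff : ∀ m : ℕ, w.coeff m = ∑ k ∈ Finset.range (m+1), v.coeff k * s (m - k) := by
    intro m; simp only [hs]; exact aux_coeff v w hv0' m
  have hkey := aux_key v w n s hwn hcoeff
  have hAv : algebraMap (Polynomial K) (RatFunc K) v ≠ 0 := RatFunc.algebraMap_ne_zero hv
  have hX : (RatFunc.X : RatFunc K) ≠ 0 := RatFunc.X_ne_zero
  set G : RatFunc K := algebraMap (Polynomial K) (RatFunc K) w
      / algebraMap (Polynomial K) (RatFunc K) v with hG
  set PF : ℕ → RatFunc K := fun k => ∑ m ∈ Finset.range k, RatFunc.C (s m) * RatFunc.X ^ m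
    with hPF
  have hGv : G * algebraMap (Polynomial K) (RatFunc K) v
      = algebraMap (Polynomial K) (RatFunc K) w := div_mul_cancel₀ _ hAv
  have hAv_sum : algebraMap (Polynomial K) (RatFunc K) v
      = ∑ k ∈ Finset.range (n+1), RatFunc.C (v.coeff k) * RatFunc.X ^ k := by
    conv_lhs => rw [Polynomial.as_sum_range' v (n+1) hvn]
    rw [map_sum]
    refine Finset.sum_congr rfl fun k _ => ?_
    rw [← Polynomial.C_mul_X_pow_eq_monomial, _root_.map_mul, _root_.map_pow,
      RatFunc.algebraMap_C, RatFunc.algebraMap_X]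
  have hmapP : ∀ k, algebraMap (Polynomial K) (RatFunc K)
      (∑ m ∈ Finset.range k, Polynomial.C (s m) * Polynomial.X ^ m) = PF k := by
    intro k
    rw [map_sum, hPF]
    refine Finset.sum_congr rfl fun m _ => ?_
    rw [_root_.map_mul, _root_.map_pow, RatFunc.algebraMap_C, RatFunc.algebraMap_X]
  have hkeyF : algebraMap (Polynomial K) (RatFunc K) w
      = ∑ k ∈ Finset.range (n+1), RatFunc.C (v.coeff k) * (RatFunc.X ^ k * PF (n - k)) := by
    conv_lhs => rw [hkey]
    rw [map_sum]
    refine Finset.sum_congr rfl fun k _ => ?_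
    rw [_root_.map_mul, _root_.map_mul, _root_.map_pow, hmapP, RatFunc.algebraMap_C,
      RatFunc.algebraMap_X]
    ring
  -- the colligation data
  set d : Matrix (Fin n) (Fin n) K := fun i j =>
    if (i : ℕ) + 1 = n then -(v.coeff (n - (j : ℕ)) / v.coeff 0)
    else if (j : ℕ) = (i : ℕ) + 1 then 1 else 0 with hd
  set c : Matrix (Fin n) (Fin 1) K := fun i _ => s (i : ℕ) with hc
  set b : Matrix (Fin 1) (Fin n) K := fun _ j => if (j : ℕ) = 0 then 1 else 0 with hb
  set am : Matrix (Fin 1) (Fin 1) K := fun _ _ => a with ham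
  set Z : Matrix (Fin n) (Fin 1) (RatFunc K) :=
    fun i _ => (G - PF (i : ℕ)) / RatFunc.X ^ (i : ℕ) with hZ
  set M : Matrix (Fin n) (Fin n) (RatFunc K) :=
    1 - (RatFunc.X : RatFunc K) • d.map RatFunc.C with hM
  have hXZ : ∀ j : Fin n, RatFunc.X ^ (j : ℕ) * Z j 0 = G - PF (j : ℕ) := by
    intro j
    simp only [hZ]
    rw [mul_comm (RatFunc.X ^ (j : ℕ)), div_mul_cancel₀ _ (pow_ne_zero _ hX)]
  -- invertibility
  have hdet : IsUnit M := by
    have hmap : M = (Matrix.map (1 - (Polynomial.X : Polynomial K) • d.map Polynomial.C)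
        (algebraMap (Polynomial K) (RatFunc K))) := by
      ext i j
      by_cases hij : i = j <;>
        simp [hM, Matrix.sub_apply, Matrix.smul_apply, Matrix.one_apply, Matrix.map_apply,
          hij, smul_eq_mul, _root_.map_sub, _root_.map_mul, RatFunc.algebraMap_C,
          RatFunc.algebraMap_X] <;> ring
    have h1 : (1 - (Polynomial.X : Polynomial K) • d.map Polynomial.C).map (Polynomial.evalRingHom (0 : K))
        = 1 := by
      ext i j
      by_cases hij : i = j <;>
        simp [Matrix.map_apply, Matrix.sub_apply, Matrix.smul_apply, Matrix.one_apply, hij,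
          smul_eq_mul]
    have hdet0 : Matrix.det (1 - (Polynomial.X : Polynomial K) • d.map Polynomial.C) ≠ 0 := by
      intro hzero
      have h2 := RingHom.map_det (Polynomial.evalRingHom (0 : K))
        (1 - (Polynomial.X : Polynomial K) • d.map Polynomial.C)
      rw [hzero, map_zero, RingHom.mapMatrix_apply, h1, Matrix.det_one] at h2
      exact zero_ne_one h2
    rw [hmap, Matrix.isUnit_iff_isUnit_det, ← RingHom.mapMatrix_apply, ← RingHom.map_det]
    exact isUnit_iff_ne_zero.mpr (RatFunc.algebraMap_ne_zero hdet0)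
  -- the fundamental identity M * Z = c
  have hMZ : M * Z = c.map RatFunc.C := by
    ext i j
    have hj : j = 0 := Subsingleton.elim j 0
    subst hj
    rw [Matrix.mul_apply]
    have hentry : ∀ k : Fin n, M i k * Z k 0
        = (if i = k then Z k 0 else 0) - RatFunc.X * (RatFunc.C (d i k) * Z k 0) := by
      intro k
      rw [hM]
      simp only [Matrix.sub_apply, Matrix.smul_apply, Matrix.one_apply, Matrix.map_apply,
        smul_eq_mul]
      rw [sub_mul, ite_mul, one_mul, zero_mul, mul_assoc]
    rw [Finset.sum_congr rfl fun k _ => hentry k, Finset.sum_sub_distrib,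
      Finset.sum_ite_eq Finset.univ i (fun k => Z k 0), ← Finset.mul_sum]
    simp only [Finset.mem_univ, if_true, hc, Matrix.map_apply]
    show _ = RatFunc.C (s (i : ℕ))
    by_cases hcase : (i : ℕ) + 1 = n
    · -- last row
      have hv0C : RatFunc.C (v.coeff 0) ≠ 0 := by
        rw [← RatFunc.algebraMap_C]
        exact RatFunc.algebraMap_ne_zero (Polynomial.C_ne_zero.mpr hv0')
      have hrow : ∀ k : Fin n,
          RatFunc.C (v.coeff 0) * (RatFunc.X ^ n * (RatFunc.C (d i k) * Z k 0))
          = -(RatFunc.C (v.coeff (n - (k : ℕ)))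
              * (RatFunc.X ^ (n - (k : ℕ)) * (G - PF (k : ℕ)))) := by
        intro k
        have hXn : RatFunc.X ^ n * Z k 0
            = RatFunc.X ^ (n - (k : ℕ)) * (G - PF (k : ℕ)) := by
          calc RatFunc.X ^ n * Z k 0
              = RatFunc.X ^ (n - (k : ℕ)) * (RatFunc.X ^ (k : ℕ) * Z k 0) := by
                rw [← mul_assoc, ← pow_add, Nat.sub_add_cancel (le_of_lt k.isLt)]
            _ = _ := by rw [hXZ k]
        have h1 : RatFunc.C (v.coeff 0) * RatFunc.C (d i k)
            = -RatFunc.C (v.coeff (n - (k : ℕ))) := by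
          rw [hd]
          dsimp only
          rw [if_pos hcase, ← _root_.map_mul, ← _root_.map_neg]
          congr 1
          field_simp
        calc RatFunc.C (v.coeff 0) * (RatFunc.X ^ n * (RatFunc.C (d i k) * Z k 0))
            = (RatFunc.C (v.coeff 0) * RatFunc.C (d i k)) * (RatFunc.X ^ n * Z k 0) := by
              ring
          _ = _ := by rw [h1, hXn]; ring
      have hT : ∑ k : Fin n, RatFunc.C (v.coeff (n - (k : ℕ))) * RatFunc.X ^ (n - (k : ℕ))
          = algebraMap (Polynomial K) (RatFunc K) v - RatFunc.C (v.coeff 0) := by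
        have h0 : (∑ k : Fin n, RatFunc.C (v.coeff (n - (k : ℕ))) * RatFunc.X ^ (n - (k : ℕ)))
            = ∑ k ∈ Finset.range n, RatFunc.C (v.coeff (n - k)) * RatFunc.X ^ (n - k) :=
          Fin.sum_univ_eq_sum_range
            (fun m => RatFunc.C (v.coeff (n - m)) * RatFunc.X ^ (n - m)) n
        have h1 : (∑ k ∈ Finset.range n, RatFunc.C (v.coeff (n - k)) * RatFunc.X ^ (n - k))
            = ∑ k ∈ Finset.range n, RatFunc.C (v.coeff (k + 1)) * RatFunc.X ^ (k + 1) := by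
          rw [← Finset.sum_range_reflect
            (fun m => RatFunc.C (v.coeff (m + 1)) * RatFunc.X ^ (m + 1)) n]
          refine Finset.sum_congr rfl fun k hk => ?_
          have h : n - k = (n - 1 - k) + 1 := by
            have := Finset.mem_range.mp hk; omega
          rw [h]
        rw [h0, h1, hAv_sum,
          Finset.sum_range_succ' (fun k => RatFunc.C (v.coeff k) * RatFunc.X ^ k) n]
        simp only [pow_zero, mul_one]
        ring
      have hW : ∑ k : Fin n, RatFunc.C (v.coeff (n - (k : ℕ)))
            * (RatFunc.X ^ (n - (k : ℕ)) * PF (k : ℕ))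
          = algebraMap (Polynomial K) (RatFunc K) w
            - RatFunc.C (v.coeff 0)
              * (PF (i : ℕ) + RatFunc.C (s (i : ℕ)) * RatFunc.X ^ (i : ℕ)) := by
        have h0 : (∑ k : Fin n, RatFunc.C (v.coeff (n - (k : ℕ)))
              * (RatFunc.X ^ (n - (k : ℕ)) * PF (k : ℕ)))
            = ∑ k ∈ Finset.range n, RatFunc.C (v.coeff (n - k))
              * (RatFunc.X ^ (n - k) * PF k) :=
          Fin.sum_univ_eq_sum_range
            (fun m => RatFunc.C (v.coeff (n - m)) * (RatFunc.X ^ (n - m) * PF m)) n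
        have h1 : (∑ k ∈ Finset.range n, RatFunc.C (v.coeff (n - k))
              * (RatFunc.X ^ (n - k) * PF k))
            = ∑ k ∈ Finset.range n, RatFunc.C (v.coeff (k + 1))
              * (RatFunc.X ^ (k + 1) * PF (n - (k + 1))) := by
          rw [← Finset.sum_range_reflect
            (fun m => RatFunc.C (v.coeff (m + 1)) * (RatFunc.X ^ (m + 1) * PF (n - (m + 1)))) n]
          refine Finset.sum_congr rfl fun k hk => ?_
          have hk' := Finset.mem_range.mp hk
          have h2 : n - k = (n - 1 - k) + 1 := by omega
          have h3 : n - ((n - 1 - k) + 1) = k := by omega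
          rw [h3, h2]
        have hPFn : PF n = PF (i : ℕ) + RatFunc.C (s (i : ℕ)) * RatFunc.X ^ (i : ℕ) := by
          conv_lhs => rw [← hcase]
          simp only [hPF]
          exact Finset.sum_range_succ _ _
        rw [h0, h1, hkeyF,
          Finset.sum_range_succ' (fun k => RatFunc.C (v.coeff k) * (RatFunc.X ^ k * PF (n - k))) n]
        simp only [pow_zero, one_mul, Nat.sub_zero]
        rw [hPFn]
        ring
      have hsplit : ∑ k : Fin n, RatFunc.C (v.coeff (n - (k : ℕ)))
            * (RatFunc.X ^ (n - (k : ℕ)) * (G - PF (k : ℕ)))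
          = G * (algebraMap (Polynomial K) (RatFunc K) v - RatFunc.C (v.coeff 0))
            - (algebraMap (Polynomial K) (RatFunc K) w
               - RatFunc.C (v.coeff 0)
                 * (PF (i : ℕ) + RatFunc.C (s (i : ℕ)) * RatFunc.X ^ (i : ℕ))) := by
        have e2 : ∀ k : Fin n, RatFunc.C (v.coeff (n - (k : ℕ)))
              * (RatFunc.X ^ (n - (k : ℕ)) * (G - PF (k : ℕ)))
            = G * (RatFunc.C (v.coeff (n - (k : ℕ))) * RatFunc.X ^ (n - (k : ℕ)))
              - RatFunc.C (v.coeff (n - (k : ℕ)))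
                * (RatFunc.X ^ (n - (k : ℕ)) * PF (k : ℕ)) := fun k => by ring
        rw [Finset.sum_congr rfl fun k _ => e2 k, Finset.sum_sub_distrib, ← Finset.mul_sum,
          hT, hW]
      have F2 : RatFunc.C (v.coeff 0)
            * (RatFunc.X ^ n * ∑ k : Fin n, RatFunc.C (d i k) * Z k 0)
          = -(G * (algebraMap (Polynomial K) (RatFunc K) v - RatFunc.C (v.coeff 0))
              - (algebraMap (Polynomial K) (RatFunc K) w
                 - RatFunc.C (v.coeff 0)
                   * (PF (i : ℕ) + RatFunc.C (s (i : ℕ)) * RatFunc.X ^ (i : ℕ)))) := by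
        calc RatFunc.C (v.coeff 0)
              * (RatFunc.X ^ n * ∑ k : Fin n, RatFunc.C (d i k) * Z k 0)
            = ∑ k : Fin n, RatFunc.C (v.coeff 0)
                * (RatFunc.X ^ n * (RatFunc.C (d i k) * Z k 0)) := by
              rw [Finset.mul_sum, Finset.mul_sum]
          _ = ∑ k : Fin n, -(RatFunc.C (v.coeff (n - (k : ℕ)))
                * (RatFunc.X ^ (n - (k : ℕ)) * (G - PF (k : ℕ)))) :=
              Finset.sum_congr rfl fun k _ => hrow k
          _ = -(∑ k : Fin n, RatFunc.C (v.coeff (n - (k : ℕ)))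
                * (RatFunc.X ^ (n - (k : ℕ)) * (G - PF (k : ℕ)))) := by
              rw [Finset.sum_neg_distrib]
          _ = _ := by rw [hsplit]
      have hXn2 : (RatFunc.X : RatFunc K) ^ n = RatFunc.X * RatFunc.X ^ (i : ℕ) := by
        conv_lhs => rw [← hcase]
        rw [pow_succ']
      have F1 := hXZ i
      apply mul_left_cancel₀ (mul_ne_zero hv0C (pow_ne_zero (i : ℕ) hX))
      linear_combination RatFunc.C (v.coeff 0) * F1 - F2 + hGv
        + (RatFunc.C (v.coeff 0) * ∑ k : Fin n, RatFunc.C (d i k) * Z k 0) * hXn2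
    · -- shift row
      have hlt : (i : ℕ) + 1 < n := by have := i.isLt; omega
      have hsum : ∑ k : Fin n, RatFunc.C (d i k) * Z k 0
          = (G - PF ((i : ℕ) + 1)) / RatFunc.X ^ ((i : ℕ) + 1) := by
        have hterm : ∀ k : Fin n, RatFunc.C (d i k) * Z k 0
            = if k = (⟨(i : ℕ) + 1, hlt⟩ : Fin n) then Z k 0 else 0 := by
          intro k
          rw [hd]
          dsimp only
          rw [if_neg hcase]
          by_cases hk : (k : ℕ) = (i : ℕ) + 1
          · rw [if_pos hk, if_pos (Fin.ext hk), _root_.map_one, one_mul]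
          · rw [if_neg hk, if_neg (fun h => hk (by rw [h])), _root_.map_zero, zero_mul]
        rw [Finset.sum_congr rfl fun k _ => hterm k,
          Finset.sum_ite_eq' Finset.univ _ (fun k => Z k 0)]
        simp only [Finset.mem_univ, if_true]
        rfl
      rw [hsum]
      simp only [hZ]
      have hstep : PF ((i : ℕ) + 1)
          = PF (i : ℕ) + RatFunc.C (s (i : ℕ)) * RatFunc.X ^ (i : ℕ) := by
        simp only [hPF]
        exact Finset.sum_range_succ _ _
      rw [hstep]
      field_simp
      ring
  -- conclude
  refine ⟨n, am, b, c, d, ?_, ?_⟩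
  · rw [← hM]; exact hdet
  · rw [← hM]
    have hZinv : M⁻¹ * c.map RatFunc.C = Z := by
      have h1 : M⁻¹ * (M * Z) = Z := by
        rw [← Matrix.mul_assoc,
          Matrix.nonsing_inv_mul M ((Matrix.isUnit_iff_isUnit_det M).mp hdet),
          Matrix.one_mul]
      rw [← hMZ]; exact h1
    rw [Matrix.mul_assoc, hZinv]
    rw [Matrix.add_apply, Matrix.smul_apply, smul_eq_mul, Matrix.map_apply]
    have hbZ : (Matrix.map b RatFunc.C * Z) 0 0 = G := by
      rw [Matrix.mul_apply]
      have hterm : ∀ k : Fin n, (Matrix.map b RatFunc.C) 0 k * Z k 0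
          = if k = (⟨0, hn0⟩ : Fin n) then Z k 0 else 0 := by
        intro k
        rw [Matrix.map_apply, hb]
        dsimp only
        by_cases hk : (k : ℕ) = 0
        · rw [if_pos hk, if_pos (Fin.ext hk), _root_.map_one, one_mul]
        · rw [if_neg hk, if_neg (fun h => hk (by rw [h])), _root_.map_zero, zero_mul]
      rw [Finset.sum_congr rfl fun k _ => hterm k,
        Finset.sum_ite_eq' Finset.univ _ (fun k => Z k 0)]
      simp only [Finset.mem_univ, if_true]
      simp [hZ, hPF]
    rw [hbZ]
    simp only [ham]
    rw [hG, eq_div_iff hAv, add_mul, mul_assoc, div_mul_cancel₀ _ hAv,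
      ← RatFunc.algebraMap_C a, ← RatFunc.algebraMap_X, ← _root_.map_mul, ← _root_.map_mul,
      ← _root_.map_add]
    congr 1
    rw [hw]
    ring
end

section
/- Let K be a field, A := !![(1:K),0,0; 1,1,1; 0,0,1] and B := !![(1:K),1,0; 0,1,0; 1,0,1] (these are the two ∘-products (g∘h and h∘g, reindexed to 3×3 matrices) of g = !![(1:K),0;1,1] and h = !![(1:K),1;0,1]). Then there is no invertible matrix u : Matrix (Fin 2) (Fin 2) K such that Matrix.fromBlocks (1 : Matrix (Fin 1) (Fin 1) K) 0 0 u * B = A * Matrix.fromBlocks (1 : Matrix (Fin 1) (Fin 1) K) 0 0 u, where the block matrices are reindexed to 3×3 matrices in the obvious way. (The semigroup Coll(1) of colligations is not commutative.) -/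
open Matrix

/-- The semigroup `Coll(1)` of colligations is not commutative: the two ∘-products
`g∘h` and `h∘g` of `g = !![1,0;1,1]` and `h = !![1,1;0,1]` are not conjugate by any
block-diagonal matrix `fromBlocks 1 0 0 u` with `u` invertible. -/
theorem coll_not_commutative {K : Type*} [Field K]
    (A B : Matrix (Fin 3) (Fin 3) K)
    (hA : A = !![(1:K),0,0; 1,1,1; 0,0,1])
    (hB : B = !![(1:K),1,0; 0,1,0; 1,0,1]) :
    ¬ ∃ u : Matrix (Fin 2) (Fin 2) K, IsUnit u ∧
      (Matrix.reindex finSumFinEquiv finSumFinEquiv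
          (Matrix.fromBlocks (1 : Matrix (Fin 1) (Fin 1) K) 0 0 u)) * B
        = A * (Matrix.reindex finSumFinEquiv finSumFinEquiv
            (Matrix.fromBlocks (1 : Matrix (Fin 1) (Fin 1) K) 0 0 u)) := by
  rintro ⟨u, -, h⟩
  have h01 := congrFun (congrFun h 0) 1
  simp [hA, hB, Matrix.mul_apply, Fin.sum_univ_succ, Matrix.reindex_apply,
    Matrix.submatrix_apply, finSumFinEquiv, Matrix.fromBlocks,
    Fin.addCases, Matrix.one_apply] at h01
end

section
/- Let g be a matrix over ℚ_p indexed by Fin α ⊕ Fin N with blocks a,b,c,d, and assume Function.Surjective (Matrix.mulVec b) and Function.Injective (Matrix.mulVec c). Let R be a lattice in Fin 2 → ℚ_p. Then χ_g(R) is a lattice in (Fin α → ℚ_p) × (Fin α → ℚ_p): it is closed under addition and under multiplication by scalars from ℤ_p (coerced into ℚ_p), it is a compact subset, and its ℚ_p-linear span is all of (Fin α → ℚ_p) × (Fin α → ℚ_p). -/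
open Matrix

/-- A lattice in a finite-dimensional `ℚ_[p]`-vector space: a subset which is closed
under addition and under multiplication by scalars from `ℤ_[p]` (coerced into `ℚ_[p]`),
is compact, and whose `ℚ_[p]`-linear span is the whole space. -/
def IsLattice (p : ℕ) [Fact p.Prime] {V : Type*} [AddCommGroup V] [Module ℚ_[p] V]
    [TopologicalSpace V] (R : Set V) : Prop :=
  (∀ x ∈ R, ∀ y ∈ R, x + y ∈ R) ∧
  (∀ (c : ℤ_[p]), ∀ x ∈ R, ((c : ℚ_[p]) • x) ∈ R) ∧
  IsCompact R ∧
  Submodule.span ℚ_[p] R = ⊤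

variable {p : ℕ} [Fact p.Prime]

/-- `R ⊗ 𝕆^N`: the `ℤ_[p]`-submodule of `(Fin N → ℚ_[p]) × (Fin N → ℚ_[p])` spanned by
the vectors `(r 0 • v, r 1 • v)` with `r ∈ R` and `v` having all coordinates in `ℤ_[p]`. -/
noncomputable def tensO {N : ℕ} (R : Set (Fin 2 → ℚ_[p])) :
    Submodule ℤ_[p] ((Fin N → ℚ_[p]) × (Fin N → ℚ_[p])) :=
  Submodule.span ℤ_[p]
    {w | ∃ r ∈ R, ∃ v : Fin N → ℚ_[p], (∀ i, ‖v i‖ ≤ 1) ∧ w = (r 0 • v, r 1 • v)}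

/-- The lattice-valued characteristic function `χ_g(R)` of a colligation `g` over `ℚ_[p]`. -/
def chiLat {α N : ℕ} (g : Matrix (Fin α ⊕ Fin N) (Fin α ⊕ Fin N) ℚ_[p])
    (R : Set (Fin 2 → ℚ_[p])) : Set ((Fin α → ℚ_[p]) × (Fin α → ℚ_[p])) :=
  {qp | ∃ x y : Fin N → ℚ_[p], (y, x) ∈ tensO (p := p) R ∧
    qp.1 = g.toBlocks₁₁.mulVec qp.2 + g.toBlocks₁₂.mulVec x ∧
    y = g.toBlocks₂₁.mulVec qp.2 + g.toBlocks₂₂.mulVec x}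

/- ### Auxiliary lemmas -/

lemma coe_smul' {V : Type*} [AddCommGroup V] [Module ℚ_[p] V] [Module ℤ_[p] V]
    [IsScalarTower ℤ_[p] ℚ_[p] V] (c : ℤ_[p]) (x : V) : (c : ℚ_[p]) • x = c • x := by
  rw [← PadicInt.algebraMap_apply, algebraMap_smul]

lemma span_int_subset {V : Type*} [AddCommGroup V] [Module ℚ_[p] V] [Module ℤ_[p] V]
    [IsScalarTower ℤ_[p] ℚ_[p] V] {R : Set V} (h0 : (0 : V) ∈ R)
    (hadd : ∀ x ∈ R, ∀ y ∈ R, x + y ∈ R)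
    (hsmul : ∀ (c : ℤ_[p]), ∀ x ∈ R, ((c : ℚ_[p]) • x) ∈ R) :
    (Submodule.span ℤ_[p] R : Set V) ⊆ R := by
  intro x hx
  induction hx using Submodule.span_induction with
  | mem x h => exact h
  | zero => exact h0
  | add x y _ _ hx hy => exact hadd x hx y hy
  | smul c x _ hx => rw [← coe_smul']; exact hsmul c x hx

lemma exists_pow_smul_mem_span {V : Type*} [AddCommGroup V] [Module ℚ_[p] V] [Module ℤ_[p] V]
    [IsScalarTower ℤ_[p] ℚ_[p] V] {R : Set V} {x : V} (hx : x ∈ Submodule.span ℚ_[p] R) :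
    ∃ n : ℕ, ((p : ℚ_[p]) ^ n) • x ∈ Submodule.span ℤ_[p] R := by
  induction hx using Submodule.span_induction with
  | mem x h => exact ⟨0, by simpa using Submodule.subset_span h⟩
  | zero => exact ⟨0, by simp⟩
  | add x y _ _ hx hy =>
      obtain ⟨n, hn⟩ := hx; obtain ⟨m, hm⟩ := hy
      refine ⟨n + m, ?_⟩
      have h1 : ((p : ℚ_[p]) ^ (n + m)) • x = ((p : ℤ_[p]) ^ m) • (((p : ℚ_[p]) ^ n) • x) := by
        rw [← coe_smul', smul_smul]
        congr 1
        push_cast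
        ring
      have h2 : ((p : ℚ_[p]) ^ (n + m)) • y = ((p : ℤ_[p]) ^ n) • (((p : ℚ_[p]) ^ m) • y) := by
        rw [← coe_smul', smul_smul]
        congr 1
        push_cast
        ring
      rw [smul_add, h1, h2]
      exact Submodule.add_mem _ (Submodule.smul_mem _ _ hn) (Submodule.smul_mem _ _ hm)
  | smul a x _ hx =>
      obtain ⟨n, hn⟩ := hx
      have hp1 : (1 : ℝ) < (p : ℝ) := by exact_mod_cast (Fact.out : p.Prime).one_lt
      obtain ⟨m, hm⟩ := pow_unbounded_of_one_lt ‖a‖ hp1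
      have hnorm : ‖a * (p : ℚ_[p]) ^ m‖ ≤ 1 := by
        rw [norm_mul, norm_pow, Padic.norm_p, inv_pow, ← div_eq_mul_inv,
          div_le_one (by positivity)]
        exact hm.le
      set uz : ℤ_[p] := ⟨a * (p : ℚ_[p]) ^ m, hnorm⟩ with huz
      refine ⟨n + m, ?_⟩
      have key : ((p : ℚ_[p]) ^ (n + m)) • (a • x) = uz • (((p : ℚ_[p]) ^ n) • x) := by
        rw [← coe_smul', smul_smul, smul_smul]
        congr 1
        have : ((uz : ℚ_[p])) = a * (p : ℚ_[p]) ^ m := rfl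
        rw [this]
        ring
      rw [key]
      exact Submodule.smul_mem _ _ hn

/-- The "ball" of radius `‖t‖` as a `ℤ_[p]`-submodule. -/
noncomputable def boundedSubmodule (N : ℕ) (t : ℚ_[p]) :
    Submodule ℤ_[p] ((Fin N → ℚ_[p]) × (Fin N → ℚ_[p])) where
  carrier := {w | (∀ i, ‖w.1 i‖ ≤ ‖t‖) ∧ (∀ i, ‖w.2 i‖ ≤ ‖t‖)}
  zero_mem' := ⟨fun i => by simp, fun i => by simp⟩
  add_mem' := by
    rintro x y ⟨hx1, hx2⟩ ⟨hy1, hy2⟩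
    exact ⟨fun i => le_trans (Padic.nonarchimedean _ _) (max_le (hx1 i) (hy1 i)),
      fun i => le_trans (Padic.nonarchimedean _ _) (max_le (hx2 i) (hy2 i))⟩
  smul_mem' := by
    rintro c w ⟨h1, h2⟩
    have hc : ‖(c : ℚ_[p])‖ ≤ 1 := by
      rw [PadicInt.padic_norm_e_of_padicInt]; exact PadicInt.norm_le_one c
    constructor <;> intro i
    · show ‖c • (w.1 i)‖ ≤ ‖t‖
      rw [← coe_smul', smul_eq_mul, norm_mul]
      exact le_trans (mul_le_of_le_one_left (norm_nonneg _) hc) (h1 i)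
    · show ‖c • (w.2 i)‖ ≤ ‖t‖
      rw [← coe_smul', smul_eq_mul, norm_mul]
      exact le_trans (mul_le_of_le_one_left (norm_nonneg _) hc) (h2 i)

lemma isCompact_of_bounded {N : ℕ} (L : Submodule ℤ_[p] ((Fin N → ℚ_[p]) × (Fin N → ℚ_[p])))
    {t : ℚ_[p]} (ht : t ≠ 0) (hL : L ≤ boundedSubmodule N t) :
    IsCompact (L : Set ((Fin N → ℚ_[p]) × (Fin N → ℚ_[p]))) := by
  have hcoe : Continuous ((↑) : ℤ_[p] → ℚ_[p]) :=
    Isometry.continuous (Isometry.of_dist_eq fun x y => rfl)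
  let φ : ((Fin N → ℤ_[p]) × (Fin N → ℤ_[p])) →ₗ[ℤ_[p]] ((Fin N → ℚ_[p]) × (Fin N → ℚ_[p])) :=
    { toFun := fun c => (fun i => t * (c.1 i : ℚ_[p]), fun i => t * (c.2 i : ℚ_[p]))
      map_add' := by
        intro x y
        refine Prod.ext ?_ ?_ <;> funext i <;>
          simp only [Prod.fst_add, Prod.snd_add, Pi.add_apply, PadicInt.coe_add] <;> ring
      map_smul' := by
        intro a x
        refine Prod.ext ?_ ?_ <;> funext i <;>
          simp only [Prod.smul_fst, Prod.smul_snd, Pi.smul_apply, smul_eq_mul,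
            RingHom.id_apply, PadicInt.coe_mul] <;>
          rw [← coe_smul', smul_eq_mul] <;> ring }
  have hrange : L ≤ LinearMap.range φ := by
    intro w hw
    obtain ⟨h1, h2⟩ := hL hw
    have hb1 : ∀ i, ‖t⁻¹ * w.1 i‖ ≤ 1 := fun i => by
      rw [norm_mul, norm_inv, ← div_eq_inv_mul, div_le_one (norm_pos_iff.mpr ht)]
      exact h1 i
    have hb2 : ∀ i, ‖t⁻¹ * w.2 i‖ ≤ 1 := fun i => by
      rw [norm_mul, norm_inv, ← div_eq_inv_mul, div_le_one (norm_pos_iff.mpr ht)]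
      exact h2 i
    refine ⟨(fun i => ⟨t⁻¹ * w.1 i, hb1 i⟩, fun i => ⟨t⁻¹ * w.2 i, hb2 i⟩), ?_⟩
    refine Prod.ext ?_ ?_ <;> funext i <;>
      show t * (t⁻¹ * _) = _ <;> rw [← mul_assoc, mul_inv_cancel₀ ht, one_mul]
  have hfg : L.FG := by
    have h1 : Submodule.map φ (Submodule.comap φ L) = L := by
      rw [Submodule.map_comap_eq, inf_eq_right.mpr hrange]
    exact h1 ▸ (IsNoetherian.noetherian (Submodule.comap φ L)).map φ
  obtain ⟨n, f, hf⟩ := Submodule.fg_iff_exists_fin_generating_family.mp hfg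
  have hset : (L : Set ((Fin N → ℚ_[p]) × (Fin N → ℚ_[p]))) =
      Set.range (fun c : Fin n → ℤ_[p] => ∑ i, c i • f i) := by
    ext w
    simp only [SetLike.mem_coe, Set.mem_range, ← hf, Submodule.mem_span_range_iff_exists_fun]
  rw [hset]
  apply isCompact_range
  apply continuous_finset_sum
  intro i _
  have heq : (fun c : Fin n → ℤ_[p] => c i • f i)
      = fun c : Fin n → ℤ_[p] => ((c i : ℚ_[p])) • f i := by
    funext c; rw [coe_smul']
  rw [heq]
  exact ((hcoe.comp (continuous_apply i)).smul continuous_const)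

/-- `χ_g(R)` is a lattice in `(Fin α → ℚ_[p]) × (Fin α → ℚ_[p])` when
`Matrix.mulVec b` is surjective and `Matrix.mulVec c` is injective. -/
theorem chiLat_isLattice {α N : ℕ}
    (g : Matrix (Fin α ⊕ Fin N) (Fin α ⊕ Fin N) ℚ_[p])
    (hb : Function.Surjective (Matrix.mulVec g.toBlocks₁₂))
    (hc : Function.Injective (Matrix.mulVec g.toBlocks₂₁))
    (R : Set (Fin 2 → ℚ_[p])) (hR : IsLattice p R) :
    IsLattice p (chiLat g R) := by
  obtain ⟨hadd, hsmul, hcomp, hspan⟩ := hR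
  have hp1 : (1 : ℝ) < (p : ℝ) := by exact_mod_cast (Fact.out : p.Prime).one_lt
  have hpne : (p : ℚ_[p]) ≠ 0 := by exact_mod_cast (Fact.out : p.Prime).ne_zero
  have hRne : R.Nonempty := by
    by_contra h
    rw [Set.not_nonempty_iff_eq_empty.mp h, Submodule.span_empty] at hspan
    exact absurd hspan bot_ne_top
  refine ⟨?_, ?_, ?_, ?_⟩
  · -- closed under addition
    rintro z1 ⟨x1, y1, hm1, hq1, hy1⟩ z2 ⟨x2, y2, hm2, hq2, hy2⟩
    refine ⟨x1 + x2, y1 + y2, ?_, ?_, ?_⟩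
    · exact Submodule.add_mem _ hm1 hm2
    · show z1.1 + z2.1 = _
      rw [hq1, hq2]
      show _ = g.toBlocks₁₁.mulVec (z1.2 + z2.2) + _
      rw [Matrix.mulVec_add, Matrix.mulVec_add]
      abel
    · rw [hy1, hy2]
      show _ = g.toBlocks₂₁.mulVec (z1.2 + z2.2) + _
      rw [Matrix.mulVec_add, Matrix.mulVec_add]
      abel
  · -- closed under ℤ_[p]-scaling
    rintro c0 z ⟨x, y, hm, hq, hy⟩
    refine ⟨(c0 : ℚ_[p]) • x, (c0 : ℚ_[p]) • y, ?_, ?_, ?_⟩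
    · have h2 : (((c0 : ℚ_[p]) • y, (c0 : ℚ_[p]) • x) :
          (Fin N → ℚ_[p]) × (Fin N → ℚ_[p])) = c0 • (y, x) := by
        rw [coe_smul', coe_smul']
        rfl
      rw [h2]
      exact Submodule.smul_mem _ _ hm
    · show (c0 : ℚ_[p]) • z.1 = g.toBlocks₁₁.mulVec ((c0 : ℚ_[p]) • z.2) + _
      rw [Matrix.mulVec_smul, Matrix.mulVec_smul, hq, smul_add]
    · show (c0 : ℚ_[p]) • y = g.toBlocks₂₁.mulVec ((c0 : ℚ_[p]) • z.2) + _
      rw [Matrix.mulVec_smul, Matrix.mulVec_smul, hy, smul_add]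
  · -- compact
    obtain ⟨r0, hr0⟩ := hRne
    obtain ⟨Cb, hCb⟩ := Bornology.IsBounded.exists_norm_le hcomp.isBounded
    have hCb0 : 0 ≤ Cb := le_trans (norm_nonneg r0) (hCb r0 hr0)
    obtain ⟨k, hk⟩ := pow_unbounded_of_one_lt Cb hp1
    set t : ℚ_[p] := ((p : ℚ_[p]) ^ k)⁻¹ with htdef
    have ht : t ≠ 0 := inv_ne_zero (pow_ne_zero _ hpne)
    have htnorm : ‖t‖ = (p : ℝ) ^ k := by
      rw [htdef, norm_inv, norm_pow, Padic.norm_p, inv_pow, inv_inv]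
    have hle : tensO (p := p) (N := N) R ≤ boundedSubmodule N t := by
      apply Submodule.span_le.mpr
      rintro w ⟨r, hr, v, hv, rfl⟩
      have hnorm : ∀ (j : Fin 2) (i : Fin N), ‖r j • v i‖ ≤ ‖t‖ := by
        intro j i
        rw [smul_eq_mul, norm_mul, htnorm]
        calc ‖r j‖ * ‖v i‖ ≤ Cb * 1 :=
              mul_le_mul (le_trans (norm_le_pi_norm r j) (hCb r hr)) (hv i)
                (norm_nonneg _) hCb0
          _ ≤ (p : ℝ) ^ k := by rw [mul_one]; exact hk.le
      exact ⟨fun i => hnorm 0 i, fun i => hnorm 1 i⟩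
    have hLcomp := isCompact_of_bounded (tensO (p := p) (N := N) R) ht hle
    obtain ⟨π, hπ⟩ := (g.toBlocks₂₁.mulVecLin).exists_leftInverse_of_injective
      (LinearMap.ker_eq_bot.mpr (by exact hc))
    have hππ : ∀ u, π (g.toBlocks₂₁.mulVec u) = u := by
      intro u
      have := LinearMap.congr_fun hπ u
      simpa using this
    have hmvc : ∀ {m k : ℕ} (M : Matrix (Fin m) (Fin k) ℚ_[p]),
        Continuous (fun v : Fin k → ℚ_[p] => M.mulVec v) := by
      intro m k M
      exact M.mulVecLin.continuous_of_finiteDimensional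
    set e : (Fin N → ℚ_[p]) × (Fin N → ℚ_[p]) → (Fin N → ℚ_[p]) :=
      fun w => w.1 - g.toBlocks₂₂.mulVec w.2 with he
    have hec : Continuous e :=
      continuous_fst.sub ((hmvc g.toBlocks₂₂).comp continuous_snd)
    have hπc : Continuous π := π.continuous_of_finiteDimensional
    set K : Set ((Fin N → ℚ_[p]) × (Fin N → ℚ_[p])) :=
      (tensO (p := p) (N := N) R : Set _) ∩
        {w | g.toBlocks₂₁.mulVec (π (e w)) = e w} with hKdef
    have hKcomp : IsCompact K :=
      hLcomp.inter_right (isClosed_eq ((hmvc g.toBlocks₂₁).comp (hπc.comp hec)) hec)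
    set F : ((Fin N → ℚ_[p]) × (Fin N → ℚ_[p])) → ((Fin α → ℚ_[p]) × (Fin α → ℚ_[p])) :=
      fun w => (g.toBlocks₁₁.mulVec (π (e w)) + g.toBlocks₁₂.mulVec w.2, π (e w)) with hF
    have hFc : Continuous F := by
      refine Continuous.prodMk ?_ (hπc.comp hec)
      exact ((hmvc g.toBlocks₁₁).comp (hπc.comp hec)).add
        ((hmvc g.toBlocks₁₂).comp continuous_snd)
    have himg : chiLat g R = F '' K := by
      ext z
      constructor
      · rintro ⟨x, y, hm, hq, hy⟩
        have hey : e (y, x) = g.toBlocks₂₁.mulVec z.2 := by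
          show y - g.toBlocks₂₂.mulVec x = _
          rw [hy]
          abel
        refine ⟨(y, x), ⟨hm, ?_⟩, ?_⟩
        · show g.toBlocks₂₁.mulVec (π (e (y, x))) = e (y, x)
          rw [hey, hππ]
        · show (g.toBlocks₁₁.mulVec (π (e (y, x))) + g.toBlocks₁₂.mulVec x,
            π (e (y, x))) = z
          rw [hey, hππ]
          exact Prod.ext hq.symm rfl
      · rintro ⟨w, ⟨hm, heq⟩, rfl⟩
        refine ⟨w.2, w.1, hm, rfl, ?_⟩
        show w.1 = g.toBlocks₂₁.mulVec (π (e w)) + g.toBlocks₂₂.mulVec w.2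
        rw [heq, he]
        show w.1 = w.1 - g.toBlocks₂₂.mulVec w.2 + g.toBlocks₂₂.mulVec w.2
        abel
    rw [himg]
    exact hKcomp.image hFc
  · -- spans
    obtain ⟨r0, hr0⟩ := hRne
    have h0R : (0 : Fin 2 → ℚ_[p]) ∈ R := by
      have := hsmul 0 r0 hr0
      simpa using this
    have hMsub := span_int_subset h0R hadd hsmul
    have hone : ∀ j : Fin 2, ∃ t : ℚ_[p], t ≠ 0 ∧ ‖t‖ ≤ 1 ∧ t • (Pi.single j 1 : Fin 2 → ℚ_[p]) ∈ R := by
      intro j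
      have hmem : (Pi.single j 1 : Fin 2 → ℚ_[p]) ∈ Submodule.span ℚ_[p] R := by
        rw [hspan]; trivial
      obtain ⟨n, hn⟩ := exists_pow_smul_mem_span hmem
      refine ⟨(p : ℚ_[p]) ^ n, pow_ne_zero _ hpne, ?_, hMsub hn⟩
      have hcast : (((p : ℤ_[p]) ^ n : ℤ_[p]) : ℚ_[p]) = (p : ℚ_[p]) ^ n := by push_cast; rfl
      rw [← hcast, PadicInt.padic_norm_e_of_padicInt]
      exact PadicInt.norm_le_one _
    obtain ⟨t1, ht1, ht1n, hr1⟩ := hone 0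
    obtain ⟨t2, ht2, ht2n, hr2⟩ := hone 1
    have hkey : ∀ y0 x0 : Fin N → ℚ_[p],
        ∃ u : ℚ_[p], u ≠ 0 ∧ ((u • y0, u • x0) ∈ tensO (p := p) (N := N) R) := by
      intro y0 x0
      obtain ⟨m, hm⟩ := pow_unbounded_of_one_lt (max ‖y0‖ ‖x0‖) hp1
      set s : ℚ_[p] := (p : ℚ_[p]) ^ m with hs
      have hsnorm : ‖s‖ = ((p : ℝ) ^ m)⁻¹ := by rw [hs, norm_pow, Padic.norm_p, inv_pow]
      have hcoordbound : ∀ (c : ℚ_[p]) (w0 : Fin N → ℚ_[p]), ‖c‖ ≤ 1 → ‖w0‖ ≤ max ‖y0‖ ‖x0‖ →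
          ∀ i, ‖((c * s) • w0) i‖ ≤ 1 := by
        intro c w0 hcn hw0 i
        show ‖(c * s) • w0 i‖ ≤ 1
        rw [smul_eq_mul, norm_mul, norm_mul, hsnorm]
        have hwi : ‖w0 i‖ ≤ (p : ℝ) ^ m :=
          le_trans (le_trans (norm_le_pi_norm w0 i) hw0) hm.le
        calc ‖c‖ * (((p : ℝ) ^ m)⁻¹) * ‖w0 i‖
            ≤ 1 * (((p : ℝ) ^ m)⁻¹) * ((p : ℝ) ^ m) := by
              apply mul_le_mul _ hwi (norm_nonneg _)
              · positivity
              · exact mul_le_mul_of_nonneg_right hcn (by positivity)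
          _ = 1 := by field_simp
      have hg1 : (((t1 * (t2 * s)) • y0, (0 : Fin N → ℚ_[p])) :
          (Fin N → ℚ_[p]) × (Fin N → ℚ_[p])) ∈ tensO (p := p) (N := N) R := by
        apply Submodule.subset_span
        refine ⟨t1 • (Pi.single 0 1 : Fin 2 → ℚ_[p]), hr1, (t2 * s) • y0,
          hcoordbound t2 y0 ht2n (le_max_left _ _), ?_⟩
        have h0 : (t1 • (Pi.single 0 1 : Fin 2 → ℚ_[p])) 0 = t1 := by simp
        have h1 : (t1 • (Pi.single 0 1 : Fin 2 → ℚ_[p])) 1 = 0 := by simp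
        rw [h0, h1, zero_smul, smul_smul]
      have hg2 : (((0 : Fin N → ℚ_[p]), (t1 * (t2 * s)) • x0) :
          (Fin N → ℚ_[p]) × (Fin N → ℚ_[p])) ∈ tensO (p := p) (N := N) R := by
        apply Submodule.subset_span
        refine ⟨t2 • (Pi.single 1 1 : Fin 2 → ℚ_[p]), hr2, (t1 * s) • x0,
          hcoordbound t1 x0 ht1n (le_max_right _ _), ?_⟩
        have h0 : (t2 • (Pi.single 1 1 : Fin 2 → ℚ_[p])) 0 = 0 := by simp
        have h1 : (t2 • (Pi.single 1 1 : Fin 2 → ℚ_[p])) 1 = t2 := by simp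
        rw [h0, h1, zero_smul, smul_smul]
        congr 2
        ring
      refine ⟨t1 * (t2 * s), by
        apply mul_ne_zero ht1 (mul_ne_zero ht2 (pow_ne_zero _ hpne)), ?_⟩
      have hsum := Submodule.add_mem _ hg1 hg2
      simpa using hsum
    rw [Submodule.eq_top_iff']
    intro z
    have stepA : ∀ q : Fin α → ℚ_[p],
        ((q, (0 : Fin α → ℚ_[p])) : _) ∈ Submodule.span ℚ_[p] (chiLat g R) := by
      intro q
      obtain ⟨x0, hx0⟩ := hb q
      obtain ⟨u, hu, hmem⟩ := hkey (g.toBlocks₂₂.mulVec x0) x0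
      have hel : ((u • q, (0 : Fin α → ℚ_[p])) : _) ∈ chiLat g R := by
        refine ⟨u • x0, u • g.toBlocks₂₂.mulVec x0, hmem, ?_, ?_⟩
        · show u • q = g.toBlocks₁₁.mulVec 0 + g.toBlocks₁₂.mulVec (u • x0)
          rw [Matrix.mulVec_zero, zero_add, Matrix.mulVec_smul, hx0]
        · show u • g.toBlocks₂₂.mulVec x0 = g.toBlocks₂₁.mulVec 0 + _
          rw [Matrix.mulVec_zero, zero_add, Matrix.mulVec_smul]
      have hsm := Submodule.smul_mem _ u⁻¹ (Submodule.subset_span hel)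
      simpa [Prod.smul_mk, smul_smul, inv_mul_cancel₀ hu] using hsm
    have stepB : ∀ pp : Fin α → ℚ_[p],
        ((g.toBlocks₁₁.mulVec pp, pp) : _) ∈ Submodule.span ℚ_[p] (chiLat g R) := by
      intro pp
      obtain ⟨u, hu, hmem⟩ := hkey (g.toBlocks₂₁.mulVec pp) 0
      have hel : ((g.toBlocks₁₁.mulVec (u • pp), u • pp) : _) ∈ chiLat g R := by
        refine ⟨0, u • g.toBlocks₂₁.mulVec pp, by simpa using hmem, ?_, ?_⟩
        · show g.toBlocks₁₁.mulVec (u • pp) = g.toBlocks₁₁.mulVec (u • pp) + g.toBlocks₁₂.mulVec 0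
          rw [Matrix.mulVec_zero, add_zero]
        · show u • g.toBlocks₂₁.mulVec pp = g.toBlocks₂₁.mulVec (u • pp) + g.toBlocks₂₂.mulVec 0
          rw [Matrix.mulVec_zero, add_zero, Matrix.mulVec_smul]
      have hsm := Submodule.smul_mem _ u⁻¹ (Submodule.subset_span hel)
      simpa [Prod.smul_mk, smul_smul, inv_mul_cancel₀ hu, Matrix.mulVec_smul] using hsm
    have hz : z = ((z.1 - g.toBlocks₁₁.mulVec z.2, (0 : Fin α → ℚ_[p])) : _) +
        (g.toBlocks₁₁.mulVec z.2, z.2) := by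
      refine Prod.ext ?_ ?_ <;> simp
    rw [hz]
    exact Submodule.add_mem _ (stepA _) (stepB _)
end

section
/- Let g be a matrix over ℚ_p indexed by Fin α ⊕ Fin N with blocks a,b,c,d, and let R, T be lattices in Fin 2 → ℚ_p such that R ⊆ T and (p : ℚ_p) • t ∈ R for every t ∈ T (i.e., T ⊇ R ⊇ pT, an edge of the Bruhat–Tits tree). Then χ_g(R) ⊆ χ_g(T) and (p : ℚ_p) • w ∈ χ_g(R) for every w ∈ χ_g(T) (i.e., χ_g(T) ⊇ χ_g(R) ⊇ p·χ_g(T)): the images of adjacent vertices are adjacent or equal. -/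
open Matrix

variable {p : ℕ} [Fact p.Prime]

/-- If `T ⊇ R ⊇ p·T` (an edge of the Bruhat–Tits tree), then
`χ_g(T) ⊇ χ_g(R) ⊇ p·χ_g(T)`: images of adjacent vertices are adjacent or equal. -/
theorem chiLat_edge {α N : ℕ}
    (g : Matrix (Fin α ⊕ Fin N) (Fin α ⊕ Fin N) ℚ_[p])
    (R T : Set (Fin 2 → ℚ_[p])) (hR : IsLattice p R) (hT : IsLattice p T)
    (hRT : R ⊆ T) (hpT : ∀ t ∈ T, ((p : ℚ_[p]) • t) ∈ R) :
    chiLat g R ⊆ chiLat g T ∧ ∀ w ∈ chiLat g T, ((p : ℚ_[p]) • w) ∈ chiLat g R := by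
  constructor
  · rintro ⟨q, w⟩ ⟨x, y, hmem, h1, h2⟩
    refine ⟨x, y, Submodule.span_mono (fun z hz => ?_) hmem, h1, h2⟩
    obtain ⟨r, hr, v, hv, hz⟩ := hz
    exact ⟨r, hRT hr, v, hv, hz⟩
  · rintro ⟨q, w⟩ ⟨x, y, hmem, h1, h2⟩
    dsimp only at h1 h2
    have key : ∀ z ∈ tensO (p := p) (N := N) T,
        ((p : ℚ_[p]) • z) ∈ tensO (p := p) (N := N) R := by
      intro z hz
      induction hz using Submodule.span_induction with
      | mem z hz =>
        obtain ⟨r, hr, v, hv, rfl⟩ := hz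
        refine Submodule.subset_span ⟨(p : ℚ_[p]) • r, hpT r hr, v, hv, ?_⟩
        simp [Prod.smul_def, smul_smul]
      | zero => simpa using (tensO (p := p) (N := N) R).zero_mem
      | add a b _ _ ha hb => simpa [smul_add] using (tensO (p := p) (N := N) R).add_mem ha hb
      | smul c a _ ha =>
        rw [smul_comm]
        exact (tensO (p := p) (N := N) R).smul_mem c ha
    refine ⟨(p : ℚ_[p]) • x, (p : ℚ_[p]) • y, ?_, ?_, ?_⟩
    · exact key _ hmem
    · show (p : ℚ_[p]) • q =
        g.toBlocks₁₁ *ᵥ ((p : ℚ_[p]) • w) + g.toBlocks₁₂ *ᵥ ((p : ℚ_[p]) • x)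
      rw [h1, Matrix.mulVec_smul, Matrix.mulVec_smul, smul_add]
    · show (p : ℚ_[p]) • y =
        g.toBlocks₂₁ *ᵥ ((p : ℚ_[p]) • w) + g.toBlocks₂₂ *ᵥ ((p : ℚ_[p]) • x)
      rw [h2, Matrix.mulVec_smul, Matrix.mulVec_smul, smul_add]
end

section
/- Let K be a field, m ≥ 1, and let g be a matrix over K indexed by Fin α ⊕ (Fin m × Fin N₁) with blocks a_g, b_g, c_g, d_g, and h a matrix indexed by Fin α ⊕ (Fin m × Fin N₂) with blocks a_h, b_h, c_h, d_h. Let S : Matrix (Fin m) (Fin m) K. Suppose 1 - d_g * S̃_{N₁} and 1 - d_h * S̃_{N₂} are invertible, where for an index set I the matrix S̃_I on Fin m × I is defined by S̃_I ((i,s),(j,t)) = S i j * (if s = t then 1 else 0) (the Kronecker product S ⊗ 1_I). Then 1 - d_{g∘h} * S̃_{N₁⊕N₂} is invertible, where g∘h is the m-colligation product indexed by Fin α ⊕ (Fin m × (Fin N₁ ⊕ Fin N₂)), and χ_{g∘h}(S) = χ_g(S) * χ_h(S), where χ_g(S) := a_g + b_g * S̃_{N₁} * (1 - d_g * S̃_{N₁})⁻¹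 * c_g and similarly for h and g∘h. -/
open Matrix

/-- The Kronecker product `S ⊗ 1_I` on `Fin m × I`. -/
def kronId {K : Type*} [Field K] {m : ℕ} {I : Type*} [DecidableEq I]
    (S : Matrix (Fin m) (Fin m) K) : Matrix (Fin m × I) (Fin m × I) K :=
  Matrix.of fun x y => S x.1 y.1 * (if x.2 = y.2 then 1 else 0)

/-- Extension of an m-colligation `g` of size `α + m·N₁` to size `α + m·(N₁ ⊕ N₂)`:
it agrees with `g` on the indices `Fin α` and `(i, Sum.inl s)`, equals the identity on the
indices `(i, Sum.inr s)`, and has all other entries `0`. -/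
def extendL {K : Type*} [Field K] {α m N₁ N₂ : ℕ}
    (g : Matrix (Fin α ⊕ (Fin m × Fin N₁)) (Fin α ⊕ (Fin m × Fin N₁)) K) :
    Matrix (Fin α ⊕ (Fin m × (Fin N₁ ⊕ Fin N₂)))
      (Fin α ⊕ (Fin m × (Fin N₁ ⊕ Fin N₂))) K :=
  Matrix.of fun x y => match x, y with
    | Sum.inl i, Sum.inl j => g (Sum.inl i) (Sum.inl j)
    | Sum.inl i, Sum.inr (j, Sum.inl t) => g (Sum.inl i) (Sum.inr (j, t))
    | Sum.inr (i, Sum.inl s), Sum.inl j => g (Sum.inr (i, s)) (Sum.inl j)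
    | Sum.inr (i, Sum.inl s), Sum.inr (j, Sum.inl t) => g (Sum.inr (i, s)) (Sum.inr (j, t))
    | Sum.inr (i, Sum.inr s), Sum.inr (j, Sum.inr t) => if i = j ∧ s = t then 1 else 0
    | _, _ => 0

/-- Extension of an m-colligation `h` of size `α + m·N₂` to size `α + m·(N₁ ⊕ N₂)`:
it agrees with `h` on the indices `Fin α` and `(i, Sum.inr s)`, equals the identity on the
indices `(i, Sum.inl s)`, and has all other entries `0`. -/
def extendR {K : Type*} [Field K] {α m N₁ N₂ : ℕ}
    (h : Matrix (Fin α ⊕ (Fin m × Fin N₂)) (Fin α ⊕ (Fin m × Fin N₂)) K) :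
    Matrix (Fin α ⊕ (Fin m × (Fin N₁ ⊕ Fin N₂)))
      (Fin α ⊕ (Fin m × (Fin N₁ ⊕ Fin N₂))) K :=
  Matrix.of fun x y => match x, y with
    | Sum.inl i, Sum.inl j => h (Sum.inl i) (Sum.inl j)
    | Sum.inl i, Sum.inr (j, Sum.inr t) => h (Sum.inl i) (Sum.inr (j, t))
    | Sum.inr (i, Sum.inr s), Sum.inl j => h (Sum.inr (i, s)) (Sum.inl j)
    | Sum.inr (i, Sum.inr s), Sum.inr (j, Sum.inr t) => h (Sum.inr (i, s)) (Sum.inr (j, t))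
    | Sum.inr (i, Sum.inl s), Sum.inr (j, Sum.inl t) => if i = j ∧ s = t then 1 else 0
    | _, _ => 0

/-- The m-colligation product `g ∘ h`. -/
def mcollProd {K : Type*} [Field K] {α m N₁ N₂ : ℕ}
    (g : Matrix (Fin α ⊕ (Fin m × Fin N₁)) (Fin α ⊕ (Fin m × Fin N₁)) K)
    (h : Matrix (Fin α ⊕ (Fin m × Fin N₂)) (Fin α ⊕ (Fin m × Fin N₂)) K) :
    Matrix (Fin α ⊕ (Fin m × (Fin N₁ ⊕ Fin N₂)))
      (Fin α ⊕ (Fin m × (Fin N₁ ⊕ Fin N₂))) K :=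
  extendL g * extendR h

/-- The boundary characteristic function of an m-colligation at `S : Matrix (Fin m) (Fin m) K`:
`χ_g(S) = a + b * S̃ * (1 - d * S̃)⁻¹ * c`. -/
noncomputable def chiM {K : Type*} [Field K] {α m : ℕ} {I : Type*} [DecidableEq I] [Fintype I]
    (g : Matrix (Fin α ⊕ (Fin m × I)) (Fin α ⊕ (Fin m × I)) K)
    (S : Matrix (Fin m) (Fin m) K) : Matrix (Fin α) (Fin α) K :=
  g.toBlocks₁₁ + g.toBlocks₁₂ * kronId (I := I) S
    * (1 - g.toBlocks₂₂ * kronId (I := I) S)⁻¹ * g.toBlocks₂₁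

section blocks
variable {K : Type*} [Field K] {α m N₁ N₂ : ℕ}
    (g : Matrix (Fin α ⊕ (Fin m × Fin N₁)) (Fin α ⊕ (Fin m × Fin N₁)) K)
    (h : Matrix (Fin α ⊕ (Fin m × Fin N₂)) (Fin α ⊕ (Fin m × Fin N₂)) K)
    (S : Matrix (Fin m) (Fin m) K)

local notation "e" => Equiv.prodSumDistrib (Fin m) (Fin N₁) (Fin N₂)

lemma kronId_reindex :
    (kronId (I := Fin N₁ ⊕ Fin N₂) S).submatrix (e).symm (e).symm
      = fromBlocks (kronId S) 0 (0 : Matrix (Fin m × Fin N₂) (Fin m × Fin N₁) K) (kronId S) := by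
  ext x y
  rcases x with ⟨i, s⟩ | ⟨i, s⟩ <;> rcases y with ⟨j, t⟩ | ⟨j, t⟩ <;>
    simp [kronId, fromBlocks, Equiv.prodSumDistrib, submatrix]

lemma blocks11 : (mcollProd g h).toBlocks₁₁ = g.toBlocks₁₁ * h.toBlocks₁₁ := by
  ext i j
  simp [mcollProd, toBlocks₁₁, Matrix.mul_apply, Fintype.sum_sum_type, Fintype.sum_prod_type,
    Fintype.sum_sum_type, extendL, extendR]

lemma blocks12 : (mcollProd g h).toBlocks₁₂.submatrix id (e).symm
    = fromCols g.toBlocks₁₂ (g.toBlocks₁₁ * h.toBlocks₁₂) := by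
  ext i x
  rcases x with ⟨j, t⟩ | ⟨j, t⟩ <;>
    simp [mcollProd, toBlocks₁₁, toBlocks₁₂, fromCols, Matrix.mul_apply,
      Fintype.sum_sum_type, Fintype.sum_prod_type, extendL, extendR, ite_and]

lemma blocks21 : (mcollProd g h).toBlocks₂₁.submatrix (e).symm id
    = fromRows (g.toBlocks₂₁ * h.toBlocks₁₁) h.toBlocks₂₁ := by
  ext x j
  rcases x with ⟨i, s⟩ | ⟨i, s⟩ <;>
    simp [mcollProd, toBlocks₁₁, toBlocks₂₁, fromRows_apply_inl, fromRows_apply_inr, Matrix.mul_apply,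
      Fintype.sum_sum_type, Fintype.sum_prod_type, extendL, extendR, ite_and]

set_option maxHeartbeats 1000000 in
lemma blocks22 : (mcollProd g h).toBlocks₂₂.submatrix (e).symm (e).symm
    = fromBlocks g.toBlocks₂₂ (g.toBlocks₂₁ * h.toBlocks₁₂) 0 h.toBlocks₂₂ := by
  ext x y
  rcases x with ⟨i, s⟩ | ⟨i, s⟩ <;> rcases y with ⟨j, t⟩ | ⟨j, t⟩ <;>
    simp [mcollProd, toBlocks₂₂, toBlocks₂₁, toBlocks₁₂, fromBlocks, Matrix.mul_apply,
      Fintype.sum_sum_type, Fintype.sum_prod_type, extendL, extendR, ite_and]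

end blocks

set_option maxHeartbeats 2000000 in
/-- `χ_{g∘h}(S) = χ_g(S) * χ_h(S)` for m-colligations, together with the invertibility of
`1 - d_{g∘h} * S̃`. -/
theorem chiM_mcollProd {K : Type*} [Field K] {α m N₁ N₂ : ℕ} (hm : 1 ≤ m)
    (g : Matrix (Fin α ⊕ (Fin m × Fin N₁)) (Fin α ⊕ (Fin m × Fin N₁)) K)
    (h : Matrix (Fin α ⊕ (Fin m × Fin N₂)) (Fin α ⊕ (Fin m × Fin N₂)) K)
    (S : Matrix (Fin m) (Fin m) K)
    (hg : IsUnit (1 - g.toBlocks₂₂ * kronId S))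
    (hh : IsUnit (1 - h.toBlocks₂₂ * kronId S)) :
    IsUnit (1 - (mcollProd g h).toBlocks₂₂ * kronId S) ∧
    chiM (mcollProd g h) S = chiM g S * chiM h S := by
  set e : Fin m × (Fin N₁ ⊕ Fin N₂) ≃ (Fin m × Fin N₁) ⊕ (Fin m × Fin N₂) :=
    Equiv.prodSumDistrib (Fin m) (Fin N₁) (Fin N₂) with he
  set a₁ := g.toBlocks₁₁; set b₁ := g.toBlocks₁₂; set c₁ := g.toBlocks₂₁; set d₁ := g.toBlocks₂₂
  set a₂ := h.toBlocks₁₁; set b₂ := h.toBlocks₁₂; set c₂ := h.toBlocks₂₁; set d₂ := h.toBlocks₂₂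
  set K₁ : Matrix (Fin m × Fin N₁) (Fin m × Fin N₁) K := kronId S
  set K₂ : Matrix (Fin m × Fin N₂) (Fin m × Fin N₂) K := kronId S
  set Kb : Matrix (Fin m × (Fin N₁ ⊕ Fin N₂)) (Fin m × (Fin N₁ ⊕ Fin N₂)) K := kronId S
  set X : Matrix (Fin m × Fin N₁) (Fin m × Fin N₁) K := 1 - d₁ * K₁ with hX
  set Z : Matrix (Fin m × Fin N₂) (Fin m × Fin N₂) K := 1 - d₂ * K₂ with hZ
  have hsub : (1 - (mcollProd g h).toBlocks₂₂ * Kb).submatrix e.symm e.symm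
      = fromBlocks X (-(c₁ * b₂ * K₂)) 0 Z := by
    have h1 : (1 - (mcollProd g h).toBlocks₂₂ * Kb).submatrix (⇑e.symm) (⇑e.symm)
        = 1 - ((mcollProd g h).toBlocks₂₂.submatrix (⇑e.symm) (⇑e.symm))
            * (Kb.submatrix (⇑e.symm) (⇑e.symm)) := by
      rw [Matrix.submatrix_mul_equiv]
      ext x y
      simp [Matrix.sub_apply, Matrix.one_apply, EmbeddingLike.apply_eq_iff_eq]
    rw [h1, blocks22, kronId_reindex, fromBlocks_multiply, ← fromBlocks_one,
      sub_eq_add_neg, fromBlocks_neg, fromBlocks_add]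
    simp [hX, hZ, sub_eq_add_neg]
    exact ⟨rfl, rfl, rfl⟩
  have hXZ : IsUnit X ↔ IsUnit Z := iff_of_true hg hh
  have hUnit : IsUnit (1 - (mcollProd g h).toBlocks₂₂ * Kb) := by
    rw [← Matrix.isUnit_submatrix_equiv e.symm e.symm, hsub, Matrix.isUnit_fromBlocks_zero₂₁]
    exact ⟨hg, hh⟩
  refine ⟨hUnit, ?_⟩
  have hinv : ((1 - (mcollProd g h).toBlocks₂₂ * Kb)⁻¹).submatrix e.symm e.symm
      = fromBlocks X⁻¹ (X⁻¹ * (c₁ * b₂ * K₂) * Z⁻¹) 0 Z⁻¹ := by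
    rw [← Matrix.inv_submatrix_equiv, hsub, inv_fromBlocks_zero₂₁_of_isUnit_iff _ _ _ hXZ]
    simp
  have key : (mcollProd g h).toBlocks₁₂ * Kb * (1 - (mcollProd g h).toBlocks₂₂ * Kb)⁻¹
        * (mcollProd g h).toBlocks₂₁
      = ((mcollProd g h).toBlocks₁₂.submatrix id ⇑e.symm)
        * (Kb.submatrix (⇑e.symm) (⇑e.symm))
        * (((1 - (mcollProd g h).toBlocks₂₂ * Kb)⁻¹).submatrix (⇑e.symm) (⇑e.symm))
        * ((mcollProd g h).toBlocks₂₁.submatrix (⇑e.symm) id) := by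
    rw [Matrix.submatrix_mul_equiv, Matrix.submatrix_mul_equiv, Matrix.submatrix_mul_equiv,
      Matrix.submatrix_id_id]
  unfold chiM
  rw [blocks11, key, blocks12, blocks21, kronId_reindex, hinv,
    fromCols_mul_fromBlocks, fromCols_mul_fromBlocks, fromCols_mul_fromRows]
  show a₁ * a₂ + _ = (a₁ + b₁ * K₁ * X⁻¹ * c₁) * (a₂ + b₂ * K₂ * Z⁻¹ * c₂)
  simp only [Matrix.mul_zero, Matrix.zero_mul, add_zero, zero_add,
    show g.toBlocks₁₂ = b₁ from rfl, show g.toBlocks₂₁ = c₁ from rfl,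
    show g.toBlocks₁₁ = a₁ from rfl, show h.toBlocks₁₂ = b₂ from rfl,
    show h.toBlocks₂₁ = c₂ from rfl, show h.toBlocks₁₁ = a₂ from rfl,
    show (kronId S : Matrix (Fin m × Fin N₁) (Fin m × Fin N₁) K) = K₁ from rfl,
    show (kronId S : Matrix (Fin m × Fin N₂) (Fin m × Fin N₂) K) = K₂ from rfl]
  generalize X⁻¹ = P
  generalize Z⁻¹ = Q
  simp only [Matrix.add_mul, Matrix.mul_add, Matrix.mul_assoc]
  abel
end
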